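/- arXiv:1806.02203 — 3 statements merged into one kernel-verified Lean document; each statement's English description precedes it below -/
import Mathlib

section
/- Let G be a subgroup of the collineation group of PG(n-1,q) acting on points (n ≥ 2). Then G is transitive on antiflags (pairs (H,x) of a hyperplane H and a point x not on H) if and only if for every line L of PG(n-1,q), the group induced by the stabilizer G_L on the q+1 points of L is 2-transitive. -/
open Module Submodule MulAction

set_option linter.unusedSectionVars false
namespace AntiflagAux

variable {F : Type*} [Field F] {V : Type*} [AddCommGroup V] [Module F V]
  [FiniteDimensional F V]

/-- Any nonzero submodule has a corank-one proper submodule. -/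
lemma exists_lt_finrank (W : Submodule F V) (hW : W ≠ ⊥) :
    ∃ W' : Submodule F V, W' < W ∧ finrank F W = finrank F W' + 1 := by
  classical
  obtain ⟨s, hs1, hs2, hs3⟩ := exists_linearIndependent F (W : Set V)
  rw [Submodule.span_eq] at hs2
  have hfin : s.Finite := hs3.setFinite
  letI := hfin.fintype
  have hcard : finrank F ↥(span F s) = s.toFinset.card := finrank_span_set_eq_card hs3
  have hne : s.Nonempty := by
    rcases Set.eq_empty_or_nonempty s with h | h
    · exfalso; apply hW; rw [← hs2, h]; simp
    · exact h
  obtain ⟨a, ha⟩ := hne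
  have hfin' : (s \ {a} : Set V).Finite := hfin.diff
  letI := hfin'.fintype
  have hli' : LinearIndependent F ((↑) : (s \ {a} : Set V) → V) := LinearIndepOn.mono (v := id) hs3 Set.diff_subset
  have hcard' : finrank F ↥(span F (s \ {a} : Set V)) = (s \ {a} : Set V).toFinset.card :=
    finrank_span_set_eq_card hli'
  have hcards : (s \ {a} : Set V).toFinset.card + 1 = s.toFinset.card := by
    have h1 : (s \ {a} : Set V).toFinset = s.toFinset.erase a := by
      ext x; simp [Set.mem_diff, and_comm]
    rw [h1, Finset.card_erase_of_mem (by simp [ha])]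
    have : 0 < s.toFinset.card := Finset.card_pos.2 ⟨a, by simp [ha]⟩
    omega
  refine ⟨span F (s \ {a} : Set V), ?_, ?_⟩
  · apply lt_of_le_of_ne
    · rw [← hs2]; exact span_mono Set.diff_subset
    · intro h
      rw [h, ← hs2] at hcard'
      omega
  · rw [← hs2, hcard, hcard']; omega

/-- Order isomorphisms of the submodule lattice do not decrease `finrank`. -/
lemma le_finrank_orderIso (g : (Submodule F V) ≃o (Submodule F V)) :
    ∀ m (W : Submodule F V), finrank F W ≤ m → finrank F W ≤ finrank F (g W) := by
  intro m
  induction m with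
  | zero => intro W hW; omega
  | succ m ih =>
    intro W hW
    rcases eq_or_ne W ⊥ with rfl | hbot
    · simp
    obtain ⟨W', hlt, heq⟩ := exists_lt_finrank W hbot
    have h1 : finrank F W' ≤ finrank F (g W') := ih W' (by omega)
    have h2 : g W' < g W := by exact g.lt_iff_lt.mpr hlt
    have h3 : finrank F (g W') < finrank F (g W) := Submodule.finrank_lt_finrank_of_lt h2
    omega

/-- Order isomorphisms of the submodule lattice preserve `finrank`. -/
lemma finrank_orderIso (g : (Submodule F V) ≃o (Submodule F V)) (W : Submodule F V) :
    finrank F (g W) = finrank F W := by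
  have h1 := le_finrank_orderIso g (finrank F W) W le_rfl
  have h2 := le_finrank_orderIso g.symm (finrank F ↥(g W)) (g W) le_rfl
  rw [g.symm_apply_apply] at h2
  omega

/-- Adding the span of a vector outside a submodule raises the rank by one. -/
lemma rank_sup_span (Y : Submodule F V) (v : V) (hv : v ∉ Y) :
    finrank F ↥(Y ⊔ (F ∙ v)) = finrank F Y + 1 := by
  have hv0 : v ≠ 0 := by rintro rfl; exact hv Y.zero_mem
  have hinf : Y ⊓ (F ∙ v) = ⊥ := by
    rw [eq_bot_iff]
    rintro w ⟨hw1, hw2⟩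
    obtain ⟨c, rfl⟩ := Submodule.mem_span_singleton.mp hw2
    rcases eq_or_ne c 0 with rfl | hc
    · simp
    · exfalso
      apply hv
      have := Y.smul_mem c⁻¹ hw1
      rwa [smul_smul, inv_mul_cancel₀ hc, one_smul] at this
  have h := Submodule.finrank_sup_add_finrank_inf_eq Y (F ∙ v)
  rw [hinf] at h
  simp only [finrank_bot, add_zero] at h
  rw [h, finrank_span_singleton hv0]

lemma rank_sup_two {p y : Submodule F V} (hp : finrank F p = 1) (hy : finrank F y = 1)
    (hne : p ≠ y) : finrank F ↥(p ⊔ y) = 2 := by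
  have hinf : finrank F ↥(p ⊓ y) = 0 := by
    by_contra h
    have h2 : finrank F ↥(p ⊓ y) ≤ 1 := hy ▸ Submodule.finrank_mono inf_le_right
    have h3 : p ⊓ y = y := eq_of_le_of_finrank_le inf_le_right (by omega)
    have h4 : y ≤ p := h3 ▸ inf_le_left
    exact hne (eq_of_le_of_finrank_le h4 (by omega)).symm
  have h := Submodule.finrank_sup_add_finrank_inf_eq p y
  rw [hp, hy, hinf] at h
  omega

lemma line_eq {a b L : Submodule F V} (ha : finrank F a = 1) (hb : finrank F b = 1)
    (hne : a ≠ b) (haL : a ≤ L) (hbL : b ≤ L) (hL : finrank F L = 2) : a ⊔ b = L :=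
  eq_of_le_of_finrank_le (sup_le haL hbL) (by rw [rank_sup_two ha hb hne, hL])

/-- On a projective line there is a point distinct from any two given subspaces. -/
lemma third_point {L : Submodule F V} (hL : finrank F L = 2) (a b : Submodule F V) :
    ∃ c : Submodule F V, c ≤ L ∧ finrank F c = 1 ∧ c ≠ a ∧ c ≠ b := by
  have hL0 : L ≠ ⊥ := by intro h; rw [h] at hL; simp at hL
  obtain ⟨u, huL, hu0⟩ := Submodule.exists_mem_ne_zero_of_ne_bot hL0
  have hspanu : (F ∙ u) ≤ L := by rwa [Submodule.span_singleton_le_iff_mem]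
  have hlt : (F ∙ u) < L := lt_of_le_of_ne hspanu (by
    intro h; rw [← h, finrank_span_singleton hu0] at hL; omega)
  obtain ⟨v, hvL, hvu⟩ := SetLike.exists_of_lt hlt
  have hv0 : v ≠ 0 := by rintro rfl; exact hvu (Submodule.zero_mem _)
  have huv0 : u + v ≠ 0 := by
    intro h
    apply hvu
    have hveq : v = (-1 : F) • u := by
      rw [neg_one_smul]; linear_combination (norm := module) h
    rw [hveq]; exact Submodule.smul_mem _ _ (Submodule.mem_span_singleton_self u)
  have hvnotu : v ∉ (F ∙ u) := hvu
  have h1 : (F ∙ u) ≠ (F ∙ v) := by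
    intro h
    exact hvnotu (h ▸ Submodule.mem_span_singleton_self v)
  have h2 : (F ∙ u) ≠ (F ∙ (u + v)) := by
    intro h
    apply hvnotu
    have huv : u + v ∈ (F ∙ u) := h ▸ Submodule.mem_span_singleton_self (u + v)
    have h3 : (u + v) - u ∈ (F ∙ u) :=
      Submodule.sub_mem _ huv (Submodule.mem_span_singleton_self u)
    simpa using h3
  have h3 : (F ∙ v) ≠ (F ∙ (u + v)) := by
    intro h
    apply hvnotu
    have huv : u + v ∈ (F ∙ v) := h ▸ Submodule.mem_span_singleton_self (u + v)
    have h4 : (u + v) - v ∈ (F ∙ v) :=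
      Submodule.sub_mem _ huv (Submodule.mem_span_singleton_self v)
    simp only [add_sub_cancel_right] at h4
    obtain ⟨c, hc⟩ := Submodule.mem_span_singleton.mp h4
    rcases eq_or_ne c 0 with rfl | hc0
    · rw [zero_smul] at hc
      exact (hu0 hc.symm).elim
    · rw [Submodule.mem_span_singleton]
      exact ⟨c⁻¹, by rw [← hc, smul_smul, inv_mul_cancel₀ hc0, one_smul]⟩
  have hvLspan : (F ∙ v) ≤ L := by rwa [Submodule.span_singleton_le_iff_mem]
  have huvL : (F ∙ (u + v)) ≤ L := by
    rw [Submodule.span_singleton_le_iff_mem]; exact L.add_mem huL hvL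
  by_cases hca : (F ∙ u) = a
  · by_cases hcb : (F ∙ v) = b
    · exact ⟨F ∙ (u + v), huvL, finrank_span_singleton huv0, by rw [← hca]; exact h2.symm,
        by rw [← hcb]; exact h3.symm⟩
    · exact ⟨F ∙ v, hvLspan, finrank_span_singleton hv0, by rw [← hca]; exact h1.symm, hcb⟩
  · by_cases hcb : (F ∙ u) = b
    · by_cases hca2 : (F ∙ v) = a
      · exact ⟨F ∙ (u + v), huvL, finrank_span_singleton huv0, by rw [← hca2]; exact h3.symm,
          by rw [← hcb]; exact h2.symm⟩
      · exact ⟨F ∙ v, hvLspan, finrank_span_singleton hv0, hca2, by rw [← hcb]; exact h1.symm⟩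
    · exact ⟨F ∙ u, hspanu, finrank_span_singleton hu0, hca, hcb⟩

/-- Extension of a subspace to any intermediate dimension. -/
lemma exists_inter (x : Submodule F V) (m : ℕ) (h1 : finrank F x ≤ m) (h2 : m ≤ finrank F V) :
    ∃ Y : Submodule F V, x ≤ Y ∧ finrank F Y = m := by
  induction m with
  | zero =>
    have : finrank F x = 0 := by omega
    exact ⟨x, le_rfl, this⟩
  | succ m ih =>
    rcases Nat.lt_or_ge (finrank F x) (m+1) with hlt | hge
    · obtain ⟨Y, hxY, hY⟩ := ih (by omega) (by omega)
      have hYne : Y ≠ ⊤ := by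
        intro h; rw [h, finrank_top] at hY; omega
      obtain ⟨v, hv⟩ : ∃ v, v ∉ Y := by
        by_contra hc; push_neg at hc; exact hYne (eq_top_iff'.2 hc)
      exact ⟨Y ⊔ (F ∙ v), le_trans hxY le_sup_left, by rw [rank_sup_span Y v hv, hY]⟩
    · exact ⟨x, le_rfl, by omega⟩


variable {F : Type*} [Field F] {V : Type*} [AddCommGroup V] [Module F V]
  [FiniteDimensional F V]

lemma card_submodule [Fintype F] [Fintype V] (W : Submodule F V) :
    Nat.card ↥W = Fintype.card F ^ finrank F W := by
  classical
  rw [Nat.card_eq_fintype_card]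
  exact card_eq_pow_finrank

lemma card_sdiff_mod [Fintype F] [Fintype V] (x Y : Submodule F V) (h : x ≤ Y) :
    Nat.card {v : V // v ∈ Y ∧ v ∉ x}
      = Fintype.card F ^ finrank F Y - Fintype.card F ^ finrank F x := by
  classical
  have e1 : {v : V // v ∈ Y ∧ v ∉ x} ≃ {v : ↥Y // ¬ (v.1 ∈ x)} :=
    { toFun := fun v => ⟨⟨v.1, v.2.1⟩, v.2.2⟩
      invFun := fun w => ⟨w.1.1, w.1.2, w.2⟩
      left_inv := fun v => rfl
      right_inv := fun w => rfl }
  have e2 : {v : ↥Y // v.1 ∈ x} ≃ ↥x :=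
    { toFun := fun v => ⟨v.1.1, v.2⟩
      invFun := fun w => ⟨⟨w.1, h w.2⟩, w.2⟩
      left_inv := fun v => rfl
      right_inv := fun w => rfl }
  rw [Nat.card_congr e1, Nat.card_eq_fintype_card, Fintype.card_subtype_compl,
    Fintype.card_congr e2]
  rw [← Nat.card_eq_fintype_card (α := ↥Y), ← Nat.card_eq_fintype_card (α := ↥x),
    card_submodule, card_submodule]

lemma pc_spec [Fintype F] [Fintype V] (x Y : Submodule F V) (h : x ≤ Y) :
    Nat.card {W : Submodule F V // x ≤ W ∧ finrank F W = finrank F x + 1 ∧ W ≤ Y} *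
      (Fintype.card F ^ (finrank F x + 1) - Fintype.card F ^ finrank F x)
      = Fintype.card F ^ finrank F Y - Fintype.card F ^ finrank F x := by
  classical
  set k := finrank F x with hk
  have hf : ∀ v : {v : V // v ∈ Y ∧ v ∉ x},
      x ≤ x ⊔ (F ∙ v.1) ∧ finrank F ↥(x ⊔ (F ∙ v.1)) = k + 1 ∧ x ⊔ (F ∙ v.1) ≤ Y := fun v =>
    ⟨le_sup_left, by rw [rank_sup_span x v.1 v.2.2],
      sup_le h (by rw [Submodule.span_singleton_le_iff_mem]; exact v.2.1)⟩
  let f : {v : V // v ∈ Y ∧ v ∉ x} →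
      {W : Submodule F V // x ≤ W ∧ finrank F W = k + 1 ∧ W ≤ Y} :=
    fun v => ⟨x ⊔ (F ∙ v.1), hf v⟩
  have key : Nat.card {v : V // v ∈ Y ∧ v ∉ x}
      = Nat.card {W : Submodule F V // x ≤ W ∧ finrank F W = k + 1 ∧ W ≤ Y}
        * (Fintype.card F ^ (k+1) - Fintype.card F ^ k) := by
    have e1 : Nat.card {v : V // v ∈ Y ∧ v ∉ x}
        = ∑ W : {W : Submodule F V // x ≤ W ∧ finrank F W = k + 1 ∧ W ≤ Y},
            Fintype.card {v : {v : V // v ∈ Y ∧ v ∉ x} // f v = W} := by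
      rw [Nat.card_eq_fintype_card, ← Fintype.card_sigma]
      exact Fintype.card_congr (Equiv.sigmaFiberEquiv f).symm
    rw [e1]
    have e2 : ∀ W : {W : Submodule F V // x ≤ W ∧ finrank F W = k + 1 ∧ W ≤ Y},
        Fintype.card {v : {v : V // v ∈ Y ∧ v ∉ x} // f v = W}
          = Fintype.card F ^ (k+1) - Fintype.card F ^ k := by
      intro W
      have e3 : {v : {v : V // v ∈ Y ∧ v ∉ x} // f v = W} ≃ {v : V // v ∈ W.1 ∧ v ∉ x} := by
        refine ((Equiv.subtypeEquivRight (fun v => Subtype.ext_iff)).trans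
          ((Equiv.subtypeSubtypeEquivSubtypeInter (fun v : V => v ∈ Y ∧ v ∉ x)
            (fun v : V => x ⊔ (F ∙ v) = W.1)).trans (Equiv.subtypeEquivRight ?_)))
        intro v
        constructor
        · rintro ⟨⟨hvY, hvx⟩, hfv⟩
          refine ⟨?_, hvx⟩
          rw [← hfv]
          exact Submodule.mem_sup_right (Submodule.mem_span_singleton_self v)
        · rintro ⟨hvW, hvx⟩
          have hvY : v ∈ Y := W.2.2.2 hvW
          refine ⟨⟨hvY, hvx⟩, ?_⟩
          apply eq_of_le_of_finrank_le
          · exact sup_le W.2.1 (by rw [Submodule.span_singleton_le_iff_mem]; exact hvW)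
          · rw [W.2.2.1, rank_sup_span x v hvx]
      rw [Fintype.card_congr e3, ← Nat.card_eq_fintype_card, card_sdiff_mod x W.1 W.2.1, W.2.2.1]
    rw [Finset.sum_congr rfl (fun W _ => e2 W), Finset.sum_const, Finset.card_univ,
      smul_eq_mul, Nat.card_eq_fintype_card]
  rw [← key, card_sdiff_mod x Y h, hk]

/-- Every hyperplane is the kernel of some functional. -/
lemma exists_dual_ker (H : Submodule F V) (hn : 1 ≤ finrank F V)
    (hH : finrank F H = finrank F V - 1) :
    ∃ φ : Module.Dual F V, LinearMap.ker φ = H ∧ φ ≠ 0 := by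
  have hq : finrank F (V ⧸ H) = 1 := by
    have := Submodule.finrank_quotient_add_finrank H
    omega
  have e : (V ⧸ H) ≃ₗ[F] F := by
    apply LinearEquiv.ofFinrankEq
    rw [hq, finrank_self]
  refine ⟨e.toLinearMap ∘ₗ H.mkQ, ?_, ?_⟩
  · rw [LinearMap.ker_comp, LinearEquiv.ker, Submodule.comap_bot, Submodule.ker_mkQ]
  · intro h
    have hne : H ≠ ⊤ := by
      intro ht; rw [ht, finrank_top] at hH; omega
    obtain ⟨v, hv⟩ : ∃ v, v ∉ H := by
      by_contra hc; push_neg at hc; exact hne (eq_top_iff'.2 hc)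
    have : e (H.mkQ v) = 0 := by
      have := congrFun (congrArg DFunLike.coe h) v
      simpa using this
    have h2 : H.mkQ v = 0 := by
      apply e.injective
      simpa using this
    rw [← LinearMap.mem_ker, Submodule.ker_mkQ] at h2
    exact hv h2

lemma hc_spec [Fintype F] [Fintype V] (Y : Submodule F V) (hn : 1 ≤ finrank F V) :
    Nat.card {H : Submodule F V // finrank F H = finrank F V - 1 ∧ Y ≤ H} *
      (Fintype.card F - 1)
      = Fintype.card F ^ (finrank F V - finrank F Y) - 1 := by
  classical
  haveI : Finite (Module.Dual F V) :=
    Finite.of_injective (fun φ => (φ : V → F)) DFunLike.coe_injective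
  letI : Fintype (Module.Dual F V) := Fintype.ofFinite _
  set n := finrank F V with hnn
  -- the set of nonzero functionals vanishing on Y
  set S := {φ : Module.Dual F V // φ ∈ Y.dualAnnihilator ∧ φ ≠ 0} with hS
  have hcardann : Nat.card ↥Y.dualAnnihilator = Fintype.card F ^ (n - finrank F Y) := by
    rw [card_submodule]
    congr 1
    have e1 : finrank F ↥Y.dualAnnihilator = finrank F (Module.Dual F (V ⧸ Y)) :=
      (LinearEquiv.finrank_eq Y.dualQuotEquivDualAnnihilator).symm
    rw [e1, Subspace.dual_finrank_eq]
    have := Submodule.finrank_quotient_add_finrank Y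
    have h2 : finrank F Y ≤ n := Y.finrank_le
    omega
  have hcardS : Nat.card S = Fintype.card F ^ (n - finrank F Y) - 1 := by
    have e1 : S ≃ {ψ : ↥Y.dualAnnihilator // ¬ (ψ = 0)} :=
      { toFun := fun φ => ⟨⟨φ.1, φ.2.1⟩, fun hc => φ.2.2 (by
          simpa [Subtype.ext_iff] using hc)⟩
        invFun := fun ψ => ⟨ψ.1.1, ψ.1.2, fun hc => ψ.2 (Subtype.ext hc)⟩
        left_inv := fun φ => rfl
        right_inv := fun ψ => by ext; rfl }
    rw [Nat.card_congr e1, Nat.card_eq_fintype_card, Fintype.card_subtype_compl,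
      Fintype.card_subtype_eq (0 : ↥Y.dualAnnihilator), ← Nat.card_eq_fintype_card, hcardann]
  -- fibration over hyperplanes containing Y
  have hf : ∀ φ : S, finrank F ↥(LinearMap.ker φ.1) = n - 1 ∧ Y ≤ LinearMap.ker φ.1 := by
    intro φ
    constructor
    · have := Module.Dual.finrank_ker_add_one_of_ne_zero φ.2.2
      omega
    · intro y hy
      rw [LinearMap.mem_ker]
      exact (Submodule.mem_dualAnnihilator φ.1).mp φ.2.1 y hy
  let f : S → {H : Submodule F V // finrank F H = n - 1 ∧ Y ≤ H} :=
    fun φ => ⟨LinearMap.ker φ.1, hf φ⟩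
  have key : Nat.card S = Nat.card {H : Submodule F V // finrank F H = n - 1 ∧ Y ≤ H}
      * (Fintype.card F - 1) := by
    have e1 : Nat.card S = ∑ H : {H : Submodule F V // finrank F H = n - 1 ∧ Y ≤ H},
        Fintype.card {φ : S // f φ = H} := by
      rw [Nat.card_eq_fintype_card, ← Fintype.card_sigma]
      exact Fintype.card_congr (Equiv.sigmaFiberEquiv f).symm
    rw [e1]
    have e2 : ∀ H : {H : Submodule F V // finrank F H = n - 1 ∧ Y ≤ H},
        Fintype.card {φ : S // f φ = H} = Fintype.card F - 1 := by
      intro H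
      obtain ⟨φ₀, hker, hφ₀⟩ := exists_dual_ker H.1 hn H.2.1
      have hHne : H.1 ≠ ⊤ := by
        intro ht
        have := H.2.1
        rw [ht, finrank_top] at this
        omega
      obtain ⟨v₀, hv₀⟩ : ∃ v, v ∉ H.1 := by
        by_contra hc; push_neg at hc; exact hHne (eq_top_iff'.2 hc)
      have hφv₀ : φ₀ v₀ ≠ 0 := by
        intro hc
        exact hv₀ (hker ▸ LinearMap.mem_ker.mpr hc)
      have hsup : H.1 ⊔ (F ∙ v₀) = ⊤ := by
        apply Submodule.eq_top_of_finrank_eq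
        rw [rank_sup_span H.1 v₀ hv₀, H.2.1]
        omega
      -- the fiber is the set of nonzero multiples of φ₀
      let t : {c : F // c ≠ 0} → {φ : S // f φ = H} := fun c =>
        ⟨⟨c.1 • φ₀, by
            constructor
            · apply Submodule.smul_mem
              rw [Submodule.mem_dualAnnihilator]
              intro w hw
              have : w ∈ LinearMap.ker φ₀ := hker ▸ H.2.2 hw
              exact LinearMap.mem_ker.mp this
            · intro hc
              apply hφv₀
              have := congrFun (congrArg DFunLike.coe hc) v₀
              simp only [LinearMap.smul_apply, smul_eq_mul, LinearMap.zero_apply] at this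
              rcases mul_eq_zero.mp this with h | h
              · exact (c.2 h).elim
              · exact h⟩,
          by
            apply Subtype.ext
            show LinearMap.ker (c.1 • φ₀) = H.1
            rw [LinearMap.ker_smul _ _ c.2, hker]⟩
      have hbij : Function.Bijective t := by
        constructor
        · intro c c' hcc
          have h1 : c.1 • φ₀ = c'.1 • φ₀ := by
            have := congrArg (fun ψ => ψ.1.1) hcc
            exact this
          have := congrFun (congrArg DFunLike.coe h1) v₀
          simp only [LinearMap.smul_apply, smul_eq_mul] at this
          exact Subtype.ext (mul_right_cancel₀ hφv₀ this)
        · rintro ⟨⟨ψ, hψann, hψ0⟩, hψH⟩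
          have hkψ : LinearMap.ker ψ = H.1 := congrArg Subtype.val hψH
          have hψv₀ : ψ v₀ ≠ 0 := by
            intro hc
            exact hv₀ (hkψ ▸ LinearMap.mem_ker.mpr hc)
          set c := ψ v₀ * (φ₀ v₀)⁻¹ with hc
          have hc0 : c ≠ 0 := mul_ne_zero hψv₀ (inv_ne_zero hφv₀)
          refine ⟨⟨c, hc0⟩, ?_⟩
          apply Subtype.ext
          apply Subtype.ext
          show c • φ₀ = ψ
          have hker2 : H.1 ⊔ (F ∙ v₀) ≤ LinearMap.ker (ψ - c • φ₀) := by
            apply sup_le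
            · intro w hw
              rw [LinearMap.mem_ker, LinearMap.sub_apply, LinearMap.smul_apply]
              have h1 : ψ w = 0 := LinearMap.mem_ker.mp (hkψ ▸ hw)
              have h2 : φ₀ w = 0 := LinearMap.mem_ker.mp (hker ▸ hw)
              rw [h1, h2, smul_zero, sub_zero]
            · rw [Submodule.span_singleton_le_iff_mem, LinearMap.mem_ker,
                LinearMap.sub_apply, LinearMap.smul_apply, smul_eq_mul, hc]
              field_simp
              simp
          rw [hsup] at hker2
          have : ψ - c • φ₀ = 0 := by
            rw [← LinearMap.ker_eq_top]
            exact top_unique hker2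
          have h3 : ψ = c • φ₀ := by
            have := sub_eq_zero.mp this
            exact this
          exact h3.symm
      rw [← Nat.card_eq_fintype_card, ← Nat.card_eq_of_bijective t hbij,
        Nat.card_eq_fintype_card, Fintype.card_subtype_compl,
        Fintype.card_subtype_eq (0 : F)]
    rw [Finset.sum_congr rfl (fun H _ => e2 H), Finset.sum_const, Finset.card_univ,
      smul_eq_mul, Nat.card_eq_fintype_card]
  rw [← key, hcardS]


lemma pow_sub_pos [Fintype F] (a b : ℕ) (h : b < a) :
    0 < Fintype.card F ^ a - Fintype.card F ^ b :=
  Nat.sub_pos_of_lt (Nat.pow_lt_pow_right Fintype.one_lt_card h)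

lemma pc_const [Fintype F] [Fintype V] {x Y Y' : Submodule F V} (hY : x ≤ Y) (hY' : x ≤ Y')
    (hr : finrank F Y = finrank F Y') :
    Nat.card {W : Submodule F V // x ≤ W ∧ finrank F W = finrank F x + 1 ∧ W ≤ Y}
      = Nat.card {W : Submodule F V // x ≤ W ∧ finrank F W = finrank F x + 1 ∧ W ≤ Y'} := by
  have h1 := pc_spec x Y hY
  have h2 := pc_spec x Y' hY'
  rw [hr] at h1
  exact Nat.eq_of_mul_eq_mul_right
    (pow_sub_pos (F := F) (finrank F ↥x + 1) (finrank F ↥x) (by omega)) (h1.trans h2.symm)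

lemma pc_lt [Fintype F] [Fintype V] {x Y Y' : Submodule F V} (hY : x ≤ Y) (hY' : x ≤ Y')
    (hr : finrank F Y < finrank F Y') :
    Nat.card {W : Submodule F V // x ≤ W ∧ finrank F W = finrank F x + 1 ∧ W ≤ Y}
      < Nat.card {W : Submodule F V // x ≤ W ∧ finrank F W = finrank F x + 1 ∧ W ≤ Y'} := by
  have h1 := pc_spec x Y hY
  have h2 := pc_spec x Y' hY'
  have hk : finrank F x ≤ finrank F Y := Submodule.finrank_mono hY
  have hq : 1 < Fintype.card F := Fintype.one_lt_card
  have hmono : Fintype.card F ^ finrank F Y < Fintype.card F ^ finrank F Y' :=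
    Nat.pow_lt_pow_right hq hr
  have hle : Fintype.card F ^ finrank F x ≤ Fintype.card F ^ finrank F Y :=
    Nat.pow_le_pow_right (by omega) hk
  have hlt : Nat.card {W : Submodule F V // x ≤ W ∧ finrank F W = finrank F x + 1 ∧ W ≤ Y} *
      (Fintype.card F ^ (finrank F x + 1) - Fintype.card F ^ finrank F x)
      < Nat.card {W : Submodule F V // x ≤ W ∧ finrank F W = finrank F x + 1 ∧ W ≤ Y'} *
      (Fintype.card F ^ (finrank F x + 1) - Fintype.card F ^ finrank F x) := by
    rw [h1, h2]; omega
  exact lt_of_mul_lt_mul_right hlt (Nat.zero_le _)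

lemma hc_const [Fintype F] [Fintype V] {Y Y' : Submodule F V} (hn : 1 ≤ finrank F V)
    (hr : finrank F Y = finrank F Y') :
    Nat.card {H : Submodule F V // finrank F H = finrank F V - 1 ∧ Y ≤ H}
      = Nat.card {H : Submodule F V // finrank F H = finrank F V - 1 ∧ Y' ≤ H} := by
  have h1 := hc_spec Y hn
  have h2 := hc_spec Y' hn
  rw [hr] at h1
  exact Nat.eq_of_mul_eq_mul_right (show 0 < Fintype.card F - 1 by
    have := Fintype.one_lt_card (α := F); omega) (h1.trans h2.symm)

lemma hc_lt [Fintype F] [Fintype V] {Y Y' : Submodule F V} (hn : 1 ≤ finrank F V)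
    (hr : finrank F Y < finrank F Y') :
    Nat.card {H : Submodule F V // finrank F H = finrank F V - 1 ∧ Y' ≤ H}
      < Nat.card {H : Submodule F V // finrank F H = finrank F V - 1 ∧ Y ≤ H} := by
  have h1 := hc_spec Y hn
  have h2 := hc_spec Y' hn
  have hYn : finrank F Y' ≤ finrank F V := Y'.finrank_le
  have hq : 1 < Fintype.card F := Fintype.one_lt_card
  have hmono : Fintype.card F ^ (finrank F V - finrank F Y')
      < Fintype.card F ^ (finrank F V - finrank F Y) :=
    Nat.pow_lt_pow_right hq (by omega)
  have hone : 1 ≤ Fintype.card F ^ (finrank F V - finrank F Y') := Nat.one_le_pow _ _ (by omega)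
  have hlt : Nat.card {H : Submodule F V // finrank F H = finrank F V - 1 ∧ Y' ≤ H} *
      (Fintype.card F - 1)
      < Nat.card {H : Submodule F V // finrank F H = finrank F V - 1 ∧ Y ≤ H} *
      (Fintype.card F - 1) := by
    rw [h1, h2]; omega
  exact lt_of_mul_lt_mul_right hlt (Nat.zero_le _)

lemma hc_pos [Fintype F] [Fintype V] {Y : Submodule F V} (hn : 1 ≤ finrank F V)
    (hr : finrank F Y < finrank F V) :
    0 < Nat.card {H : Submodule F V // finrank F H = finrank F V - 1 ∧ Y ≤ H} := by
  have h1 := hc_spec Y hn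
  have hq : 1 < Fintype.card F := Fintype.one_lt_card
  have : 1 < Fintype.card F ^ (finrank F V - finrank F Y) := by
    have : Fintype.card F ^ 1 ≤ Fintype.card F ^ (finrank F V - finrank F Y) :=
      Nat.pow_le_pow_right (by omega) (by omega)
    have h5 : Fintype.card F ≤ Fintype.card F ^ (finrank F V - finrank F Y) := by
      simpa using this
    exact lt_of_lt_of_le hq h5
  rcases Nat.eq_zero_or_pos (Nat.card {H : Submodule F V // finrank F H = finrank F V - 1 ∧ Y ≤ H}) with h | h
  · rw [h, zero_mul] at h1; omega
  · exact h

lemma coatom_inf {H H' : Submodule F V} (hn2 : 2 ≤ finrank F V)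
    (hH : finrank F H = finrank F V - 1) (hH' : finrank F H' = finrank F V - 1)
    (hne : H ≠ H') : finrank F ↥(H ⊓ H') = finrank F V - 2 := by
  have hlt : H < H ⊔ H' := by
    rcases lt_or_eq_of_le (le_sup_left : H ≤ H ⊔ H') with h | h
    · exact h
    · exfalso
      have h2 : H' ≤ H := h ▸ le_sup_right
      exact hne (eq_of_le_of_finrank_le h2 (by omega)).symm
  have h1 : finrank F ↥(H ⊔ H') ≤ finrank F V := Submodule.finrank_le _
  have h2 : finrank F H < finrank F ↥(H ⊔ H') := Submodule.finrank_lt_finrank_of_lt hlt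
  have hsup : H ⊔ H' = ⊤ := Submodule.eq_top_of_finrank_eq (by omega)
  have h3 := Submodule.finrank_sup_add_finrank_inf_eq H H'
  rw [hsup, finrank_top] at h3
  omega

lemma a_pair {x W W' : Submodule F V} (hW : x ≤ W) (hW' : x ≤ W')
    (hrW : finrank F W = finrank F x + 1) (hrW' : finrank F W' = finrank F x + 1)
    (hne : W ≠ W') : finrank F ↥(W ⊔ W') = finrank F x + 2 := by
  have h1 : finrank F x ≤ finrank F ↥(W ⊓ W') := Submodule.finrank_mono (le_inf hW hW')
  have h2 : finrank F ↥(W ⊓ W') ≤ finrank F W := Submodule.finrank_mono inf_le_left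
  have h3 : finrank F ↥(W ⊓ W') ≠ finrank F W := by
    intro h
    have h4 : W ⊓ W' = W := eq_of_le_of_finrank_le inf_le_left (by omega)
    have h5 : W ≤ W' := h4 ▸ inf_le_right
    exact hne (eq_of_le_of_finrank_le h5 (by omega))
  have h6 := Submodule.finrank_sup_add_finrank_inf_eq W W'
  omega

/-- Main linear-algebra input: if the pair-counts of an incidence relation have constant
diagonal `α` and constant off-diagonal `β < α`, then the incidence map is injective. -/
lemma zero_of_incidence {A B : Type*} [Fintype A] [Fintype B]
    (R : A → B → Prop) [∀ W H, Decidable (R W H)] (α β : ℕ) (hβα : β < α)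
    (hdiag : ∀ H : B, Nat.card {W : A // R W H ∧ R W H} = α)
    (hoff : ∀ H H' : B, H ≠ H' → Nat.card {W : A // R W H ∧ R W H'} = β)
    (v : B → ℚ) (hv : ∀ W : A, (∑ H : B, if R W H then v H else 0) = 0) : v = 0 := by
  classical
  have key : (0:ℚ) = (β:ℚ) * (∑ H : B, v H) ^ 2 + ((α:ℚ) - β) * ∑ H : B, (v H)^2 := by
    have h0 : (0:ℚ) = ∑ W : A,
        (∑ H : B, if R W H then v H else 0) * (∑ H : B, if R W H then v H else 0) := by
      simp only [hv, mul_zero, Finset.sum_const_zero]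
    have h1 : ∀ W : A, (∑ H : B, if R W H then v H else 0) * (∑ H : B, if R W H then v H else 0)
        = ∑ H : B, ∑ H' : B, if R W H ∧ R W H' then v H * v H' else 0 := by
      intro W
      rw [Finset.sum_mul_sum]
      refine Finset.sum_congr rfl fun H _ => Finset.sum_congr rfl fun H' _ => ?_
      by_cases hA : R W H <;> by_cases hB : R W H' <;> simp [hA, hB]
    rw [Finset.sum_congr rfl (fun W _ => h1 W)] at h0
    rw [Finset.sum_comm] at h0
    have h2 : ∀ H : B, ∑ W : A, ∑ H' : B, (if R W H ∧ R W H' then v H * v H' else 0)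
        = ∑ H' : B, ∑ W : A, (if R W H ∧ R W H' then v H * v H' else 0) :=
      fun H => Finset.sum_comm
    rw [Finset.sum_congr rfl (fun H _ => h2 H)] at h0
    have h3 : ∀ H H' : B, ∑ W : A, (if R W H ∧ R W H' then v H * v H' else 0)
        = v H * v H' * (Nat.card {W : A // R W H ∧ R W H'} : ℚ) := by
      intro H H'
      rw [← Finset.sum_filter, Finset.sum_const, Nat.card_eq_fintype_card,
        Fintype.card_subtype]
      push_cast
      ring
    rw [Finset.sum_congr rfl (fun H _ => Finset.sum_congr rfl (fun H' _ => h3 H H'))] at h0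
    have h4 : ∀ H H' : B, v H * v H' * (Nat.card {W : A // R W H ∧ R W H'} : ℚ)
        = v H * v H' * (β:ℚ) + (if H' = H then v H * v H' * ((α:ℚ) - β) else 0) := by
      intro H H'
      rcases eq_or_ne H' H with rfl | hne
      · rw [hdiag H', if_pos rfl]
        ring
      · rw [hoff H H' (Ne.symm hne), if_neg hne]
        ring
    rw [Finset.sum_congr rfl (fun H _ => Finset.sum_congr rfl (fun H' _ => h4 H H'))] at h0
    have h5 : ∀ H : B, ∑ H' : B,
        (v H * v H' * (β:ℚ) + (if H' = H then v H * v H' * ((α:ℚ) - β) else 0))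
        = (∑ H' : B, v H * v H' * (β:ℚ)) + v H * v H * ((α:ℚ) - β) := by
      intro H
      rw [Finset.sum_add_distrib, Finset.sum_ite_eq' Finset.univ H
        (fun H' => v H * v H' * ((α:ℚ) - β))]
      simp
    rw [Finset.sum_congr rfl (fun H _ => h5 H), Finset.sum_add_distrib] at h0
    have h6 : ∑ H : B, ∑ H' : B, v H * v H' * (β:ℚ) = (β:ℚ) * (∑ H : B, v H)^2 := by
      rw [sq, Finset.sum_mul_sum, Finset.mul_sum]
      refine Finset.sum_congr rfl fun H _ => ?_
      rw [Finset.mul_sum]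
      exact Finset.sum_congr rfl fun H' _ => by ring
    have h7 : ∑ H : B, v H * v H * ((α:ℚ) - β) = ((α:ℚ) - β) * ∑ H : B, (v H)^2 := by
      rw [Finset.mul_sum]
      exact Finset.sum_congr rfl fun H _ => by ring
    rw [h6, h7] at h0
    exact h0
  have hαβ : (0:ℚ) < (α:ℚ) - β := by
    have : (β:ℚ) < α := by exact_mod_cast hβα
    linarith
  have hs1 : (0:ℚ) ≤ (β:ℚ) * (∑ H : B, v H) ^ 2 :=
    mul_nonneg (by positivity) (sq_nonneg _)
  have hs2 : (0:ℚ) ≤ ∑ H : B, (v H)^2 := Finset.sum_nonneg fun H _ => sq_nonneg _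
  have hzero : ∑ H : B, (v H)^2 = 0 := by nlinarith
  funext H
  have := (Finset.sum_eq_zero_iff_of_nonneg (fun H _ => sq_nonneg (v H))).mp hzero H
    (Finset.mem_univ H)
  exact pow_eq_zero_iff (by omega) |>.mp (this)


lemma trace_funLeft {A : Type*} [Fintype A] [DecidableEq A] (σ : Equiv.Perm A) :
    LinearMap.trace ℚ (A → ℚ) (LinearMap.funLeft ℚ ℚ σ)
      = ((Finset.univ.filter fun a => σ a = a).card : ℚ) := by
  rw [LinearMap.trace_eq_matrix_trace ℚ (Pi.basisFun ℚ A), Matrix.trace]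
  have h : ∀ i : A, Matrix.diag (LinearMap.toMatrix (Pi.basisFun ℚ A) (Pi.basisFun ℚ A)
      (LinearMap.funLeft ℚ ℚ σ)) i = if σ i = i then 1 else 0 := by
    intro i
    simp [Matrix.diag, LinearMap.toMatrix_apply, LinearMap.funLeft_apply, Pi.basisFun_apply,
      Pi.basisFun_repr, Pi.single_apply]
  rw [Finset.sum_congr rfl (fun i _ => h i)]
  simp [Finset.sum_ite_eq, Finset.filter_eq']

/-- Core counting lemma: a lattice automorphism fixing `x` fixes equally many
`(k+1)`-dimensional subspaces above `x` as hyperplanes above `x`. -/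
lemma core [Fintype F] [Fintype V] (x : Submodule F V) (k : ℕ) (hk : finrank F x = k)
    (hkn : k + 2 ≤ finrank F V)
    (g : (Submodule F V) ≃o (Submodule F V)) (hg : g x = x) :
    Nat.card {W : Submodule F V // (x ≤ W ∧ finrank F W = k + 1) ∧ g W = W}
      = Nat.card {H : Submodule F V //
          (finrank F H = finrank F V - 1 ∧ x ≤ H) ∧ g H = H} := by
  classical
  subst hk
  have hgsymm : g.symm x = x := (OrderIso.symm_apply_eq g).mpr hg.symm
  set n := finrank F V with hn
  set K := finrank F ↥x with hK
  set A := {W : Submodule F V // x ≤ W ∧ finrank F W = K + 1} with hA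
  set B := {H : Submodule F V // finrank F H = n - 1 ∧ x ≤ H} with hB
  let σ : A ≃ A :=
    { toFun := fun W => ⟨g W.1, by
        refine ⟨?_, by rw [finrank_orderIso g W.1]; exact W.2.2⟩
        have h := g.monotone W.2.1; rwa [hg] at h⟩
      invFun := fun W => ⟨g.symm W.1, by
        refine ⟨?_, by rw [finrank_orderIso g.symm W.1]; exact W.2.2⟩
        have h := g.symm.monotone W.2.1; rwa [hgsymm] at h⟩
      left_inv := fun W => Subtype.ext (g.symm_apply_apply W.1)
      right_inv := fun W => Subtype.ext (g.apply_symm_apply W.1) }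
  let τ : B ≃ B :=
    { toFun := fun H => ⟨g H.1, by
        refine ⟨by rw [finrank_orderIso g H.1]; exact H.2.1, ?_⟩
        have h := g.monotone H.2.2; rwa [hg] at h⟩
      invFun := fun H => ⟨g.symm H.1, by
        refine ⟨by rw [finrank_orderIso g.symm H.1]; exact H.2.1, ?_⟩
        have h := g.symm.monotone H.2.2; rwa [hgsymm] at h⟩
      left_inv := fun H => Subtype.ext (g.symm_apply_apply H.1)
      right_inv := fun H => Subtype.ext (g.apply_symm_apply H.1) }
  have hσval : ∀ W : A, (σ W).1 = g W.1 := fun W => rfl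
  have hτval : ∀ H : B, (τ H).1 = g H.1 := fun H => rfl
  -- reference counts
  have hBpos : 0 < Nat.card B := hc_pos (by omega) (by omega)
  obtain ⟨H₀⟩ : Nonempty B := by
    rcases Nat.card_pos_iff.mp hBpos with ⟨h, _⟩; exact h
  obtain ⟨Y₂, hxY₂, hY₂⟩ := exists_inter x (n - 2) (by omega) (by omega)
  obtain ⟨W₀, hxW₀, hW₀⟩ := exists_inter x (K + 1) (by omega) (by omega)
  obtain ⟨Y₃, hxY₃, hY₃⟩ := exists_inter x (K + 2) (by omega) (by omega)
  set α := Nat.card {W : Submodule F V // x ≤ W ∧ finrank F W = K + 1 ∧ W ≤ H₀.1} with hα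
  set β := Nat.card {W : Submodule F V // x ≤ W ∧ finrank F W = K + 1 ∧ W ≤ Y₂} with hβ
  set γ := Nat.card {H : Submodule F V // finrank F H = n - 1 ∧ W₀ ≤ H} with hγ
  set δ := Nat.card {H : Submodule F V // finrank F H = n - 1 ∧ Y₃ ≤ H} with hδ
  -- the incidence maps
  let Φ : (B → ℚ) →ₗ[ℚ] (A → ℚ) :=
    { toFun := fun v W => ∑ H : B, if W.1 ≤ H.1 then v H else 0
      map_add' := by
        intro u v; funext W
        show (∑ H : B, if W.1 ≤ H.1 then (u + v) H else 0)
          = (∑ H : B, if W.1 ≤ H.1 then u H else 0) + (∑ H : B, if W.1 ≤ H.1 then v H else 0)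
        rw [← Finset.sum_add_distrib]
        exact Finset.sum_congr rfl fun H _ => by by_cases h : W.1 ≤ H.1 <;> simp [h]
      map_smul' := by
        intro c v; funext W
        show (∑ H : B, if W.1 ≤ H.1 then (c • v) H else 0)
          = c • (∑ H : B, if W.1 ≤ H.1 then v H else 0)
        rw [Finset.smul_sum]
        exact Finset.sum_congr rfl fun H _ => by by_cases h : W.1 ≤ H.1 <;> simp [h] }
  let Ψ : (A → ℚ) →ₗ[ℚ] (B → ℚ) :=
    { toFun := fun u H => ∑ W : A, if W.1 ≤ H.1 then u W else 0
      map_add' := by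
        intro u v; funext H
        show (∑ W : A, if W.1 ≤ H.1 then (u + v) W else 0)
          = (∑ W : A, if W.1 ≤ H.1 then u W else 0) + (∑ W : A, if W.1 ≤ H.1 then v W else 0)
        rw [← Finset.sum_add_distrib]
        exact Finset.sum_congr rfl fun W _ => by by_cases h : W.1 ≤ H.1 <;> simp [h]
      map_smul' := by
        intro c v; funext H
        show (∑ W : A, if W.1 ≤ H.1 then (c • v) W else 0)
          = c • (∑ W : A, if W.1 ≤ H.1 then v W else 0)
        rw [Finset.smul_sum]
        exact Finset.sum_congr rfl fun W _ => by by_cases h : W.1 ≤ H.1 <;> simp [h] }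
  -- injectivity of Φ
  have hβα : β < α := pc_lt hxY₂ H₀.2.2 (by rw [hY₂, H₀.2.1]; omega)
  have hΦ0 : ∀ v, Φ v = 0 → v = 0 := by
    intro v hv
    refine zero_of_incidence (fun (W : A) (H : B) => W.1 ≤ H.1) α β hβα ?_ ?_ v
      (fun W => congrFun hv W)
    · intro H
      rw [hα]
      rw [Nat.card_congr ((Equiv.subtypeSubtypeEquivSubtypeInter
        (fun W : Submodule F V => x ≤ W ∧ finrank F W = K + 1)
        (fun W : Submodule F V => W ≤ H.1 ∧ W ≤ H.1)).trans
          (Equiv.subtypeEquivRight (fun W => by tauto)) :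
        {W : A // W.1 ≤ H.1 ∧ W.1 ≤ H.1}
          ≃ {W : Submodule F V // x ≤ W ∧ finrank F W = K + 1 ∧ W ≤ H.1})]
      exact pc_const H.2.2 H₀.2.2 (by rw [H.2.1, H₀.2.1])
    · intro H H' hne
      have hne' : H.1 ≠ H'.1 := fun h => hne (Subtype.ext h)
      rw [hβ]
      rw [Nat.card_congr ((Equiv.subtypeSubtypeEquivSubtypeInter
        (fun W : Submodule F V => x ≤ W ∧ finrank F W = K + 1)
        (fun W : Submodule F V => W ≤ H.1 ∧ W ≤ H'.1)).trans
          (Equiv.subtypeEquivRight (fun W => by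
            simp only [le_inf_iff]
            tauto)) :
        {W : A // W.1 ≤ H.1 ∧ W.1 ≤ H'.1}
          ≃ {W : Submodule F V // x ≤ W ∧ finrank F W = K + 1 ∧ W ≤ H.1 ⊓ H'.1})]
      exact pc_const (le_inf H.2.2 H'.2.2) hxY₂
        (by rw [coatom_inf (by omega) H.2.1 H'.2.1 hne', hY₂])
  have hΦinj : Function.Injective Φ := by
    intro u v huv
    have := hΦ0 (u - v) (by rw [map_sub, huv, sub_self])
    exact sub_eq_zero.mp this
  -- injectivity of Ψ
  have hδγ : δ < γ := hc_lt (by omega) (by rw [hW₀, hY₃]; omega)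
  have hΨ0 : ∀ u, Ψ u = 0 → u = 0 := by
    intro u hu
    refine zero_of_incidence (fun (H : B) (W : A) => W.1 ≤ H.1) γ δ hδγ ?_ ?_ u
      (fun H => congrFun hu H)
    · intro W
      rw [hγ]
      rw [Nat.card_congr ((Equiv.subtypeSubtypeEquivSubtypeInter
        (fun H : Submodule F V => finrank F H = n - 1 ∧ x ≤ H)
        (fun H : Submodule F V => W.1 ≤ H ∧ W.1 ≤ H)).trans
          (Equiv.subtypeEquivRight (fun H => by
            constructor
            · rintro ⟨⟨h1, h2⟩, h3, h4⟩; exact ⟨h1, h3⟩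
            · rintro ⟨h1, h3⟩; exact ⟨⟨h1, le_trans W.2.1 h3⟩, h3, h3⟩)) :
        {H : B // W.1 ≤ H.1 ∧ W.1 ≤ H.1}
          ≃ {H : Submodule F V // finrank F H = n - 1 ∧ W.1 ≤ H})]
      exact hc_const (by omega) (by rw [W.2.2, hW₀])
    · intro W W' hne
      have hne' : W.1 ≠ W'.1 := fun h => hne (Subtype.ext h)
      rw [hδ]
      rw [Nat.card_congr ((Equiv.subtypeSubtypeEquivSubtypeInter
        (fun H : Submodule F V => finrank F H = n - 1 ∧ x ≤ H)
        (fun H : Submodule F V => W.1 ≤ H ∧ W'.1 ≤ H)).trans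
          (Equiv.subtypeEquivRight (fun H => by
            constructor
            · rintro ⟨⟨h1, h2⟩, h3, h4⟩; exact ⟨h1, sup_le h3 h4⟩
            · rintro ⟨h1, h3⟩
              exact ⟨⟨h1, le_trans W.2.1 (le_trans le_sup_left h3)⟩,
                le_trans le_sup_left h3, le_trans le_sup_right h3⟩)) :
        {H : B // W.1 ≤ H.1 ∧ W'.1 ≤ H.1}
          ≃ {H : Submodule F V // finrank F H = n - 1 ∧ W.1 ⊔ W'.1 ≤ H})]
      exact hc_const (by omega)
        (by rw [a_pair W.2.1 W'.2.1 W.2.2 W'.2.2 hne', hY₃])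
  have hΨinj : Function.Injective Ψ := by
    intro u v huv
    have := hΨ0 (u - v) (by rw [map_sub, huv, sub_self])
    exact sub_eq_zero.mp this
  -- Φ is bijective
  have hcards : finrank ℚ (A → ℚ) = finrank ℚ (B → ℚ) :=
    le_antisymm (LinearMap.finrank_le_finrank_of_injective hΨinj)
      (LinearMap.finrank_le_finrank_of_injective hΦinj)
  let e0 : (A → ℚ) ≃ₗ[ℚ] (B → ℚ) := LinearEquiv.ofFinrankEq _ _ hcards
  have hΦsurj : Function.Surjective Φ := by
    have hT : Function.Injective (e0.toLinearMap ∘ₗ Φ) := e0.injective.comp hΦinj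
    have hTs : Function.Surjective (e0.toLinearMap ∘ₗ Φ) :=
      LinearMap.injective_iff_surjective.mp hT
    intro u
    obtain ⟨w, hw⟩ := hTs (e0 u)
    exact ⟨w, e0.injective hw⟩
  let e : (B → ℚ) ≃ₗ[ℚ] (A → ℚ) := LinearEquiv.ofBijective Φ ⟨hΦinj, hΦsurj⟩
  -- equivariance
  have hEq : ∀ v : B → ℚ, Φ (LinearMap.funLeft ℚ ℚ (⇑τ) v)
      = LinearMap.funLeft ℚ ℚ (⇑σ) (Φ v) := by
    intro v; funext W
    show (∑ H : B, if W.1 ≤ H.1 then v (τ H) else 0)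
      = ∑ H : B, if (σ W).1 ≤ H.1 then v H else 0
    rw [← Equiv.sum_comp τ (fun H : B => if (σ W).1 ≤ H.1 then v H else 0)]
    refine Finset.sum_congr rfl fun H _ => ?_
    refine if_congr ?_ rfl rfl
    rw [hσval W, hτval H]
    exact g.le_iff_le.symm
  have hconj : (LinearMap.funLeft ℚ ℚ (⇑τ)) = e.symm.conj (LinearMap.funLeft ℚ ℚ (⇑σ)) := by
    apply LinearMap.ext; intro v
    rw [LinearEquiv.conj_apply]
    show LinearMap.funLeft ℚ ℚ (⇑τ) v = e.symm (LinearMap.funLeft ℚ ℚ (⇑σ) (e.symm.symm v))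
    apply e.injective
    rw [LinearEquiv.apply_symm_apply]
    have h2 : e.symm.symm v = e v := by rw [LinearEquiv.symm_symm]
    rw [h2]
    show Φ ((LinearMap.funLeft ℚ ℚ (⇑τ)) v) = (LinearMap.funLeft ℚ ℚ (⇑σ)) (Φ v)
    exact hEq v
  have htrace : LinearMap.trace ℚ (B → ℚ) (LinearMap.funLeft ℚ ℚ (⇑τ))
      = LinearMap.trace ℚ (A → ℚ) (LinearMap.funLeft ℚ ℚ (⇑σ)) := by
    rw [hconj]
    exact LinearMap.trace_conj' (LinearMap.funLeft ℚ ℚ (⇑σ)) e.symm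
  have hfilter : ((Finset.univ.filter fun H : B => τ H = H).card : ℚ)
      = ((Finset.univ.filter fun W : A => σ W = W).card : ℚ) := by
    rw [← trace_funLeft τ, ← trace_funLeft σ, htrace]
  have hfilterN : (Finset.univ.filter fun H : B => τ H = H).card
      = (Finset.univ.filter fun W : A => σ W = W).card := by
    exact_mod_cast hfilter
  -- translate to the statement
  have eA : {W : Submodule F V // (x ≤ W ∧ finrank F W = K + 1) ∧ g W = W}
      ≃ {W : A // σ W = W} :=
    ((Equiv.subtypeSubtypeEquivSubtypeInter
      (fun W : Submodule F V => x ≤ W ∧ finrank F W = K + 1)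
      (fun W : Submodule F V => g W = W)).symm.trans
      (Equiv.subtypeEquivRight (fun W => ⟨fun h => Subtype.ext ((hσval W).trans h),
        fun h => ((hσval W).symm.trans (congrArg Subtype.val h))⟩)))
  have eB : {H : Submodule F V // (finrank F H = n - 1 ∧ x ≤ H) ∧ g H = H}
      ≃ {H : B // τ H = H} :=
    ((Equiv.subtypeSubtypeEquivSubtypeInter
      (fun H : Submodule F V => finrank F H = n - 1 ∧ x ≤ H)
      (fun H : Submodule F V => g H = H)).symm.trans
      (Equiv.subtypeEquivRight (fun H => ⟨fun h => Subtype.ext ((hτval H).trans h),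
        fun h => ((hτval H).symm.trans (congrArg Subtype.val h))⟩)))
  rw [Nat.card_congr eA, Nat.card_congr eB, Nat.card_eq_fintype_card,
    Nat.card_eq_fintype_card, Fintype.card_subtype, Fintype.card_subtype, hfilterN]

lemma ncard_split {X : Type*} [Finite X] (P Q : X → Prop) :
    Nat.card {a : X // P a} = Nat.card {a : X // P a ∧ Q a} + Nat.card {a : X // P a ∧ ¬ Q a} := by
  classical
  letI : Fintype X := Fintype.ofFinite X
  rw [Nat.card_eq_fintype_card, Nat.card_eq_fintype_card, Nat.card_eq_fintype_card,
    ← Fintype.card_congr (Equiv.subtypeSubtypeEquivSubtypeInter P Q),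
    ← Fintype.card_congr (Equiv.subtypeSubtypeEquivSubtypeInter P (fun a => ¬ Q a)),
    ← Fintype.card_sum]
  exact (Fintype.card_congr (Equiv.sumCompl (fun x : {a : X // P a} => Q x.1))).symm

lemma ncard_singleton {X : Type*} (P : X → Prop) (c : X) (hc : P c) (hu : ∀ a, P a → a = c) :
    Nat.card {a : X // P a} = 1 := by
  rw [Nat.card_eq_one_iff_unique]
  exact ⟨⟨fun a b => Subtype.ext ((hu a.1 a.2).trans (hu b.1 b.2).symm)⟩, ⟨⟨c, hc⟩⟩⟩

lemma inj_of_surj_ncard {X Y : Type*} [Finite X] [Finite Y] (f : X → Y)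
    (hs : Function.Surjective f) (hc : Nat.card X = Nat.card Y) : Function.Injective f := by
  classical
  letI : Fintype X := Fintype.ofFinite X
  letI : Fintype Y := Fintype.ofFinite Y
  rw [Nat.card_eq_fintype_card, Nat.card_eq_fintype_card] at hc
  exact ((Fintype.bijective_iff_surjective_and_card f).2 ⟨hs, hc⟩).1

/-- The action of a subgroup of lattice automorphisms on a set of invariant submodules. -/
def actOn (Γ : Subgroup ((Submodule F V) ≃o (Submodule F V))) (P : Submodule F V → Prop)
    (hP : ∀ g : (Submodule F V) ≃o (Submodule F V), g ∈ Γ → ∀ W, P W → P (g W)) :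
    MulAction ↥Γ {W : Submodule F V // P W} where
  smul := fun γ W => ⟨γ.1 W.1, hP γ.1 γ.2 W.1 W.2⟩
  one_smul := fun W => Subtype.ext rfl
  mul_smul := fun γ δ W => Subtype.ext rfl

lemma actOn_smul_val (Γ : Subgroup ((Submodule F V) ≃o (Submodule F V)))
    (P : Submodule F V → Prop) (hP) (γ : ↥Γ) (W : {W : Submodule F V // P W}) :
    ((@HSMul.hSMul _ _ _ (@instHSMul _ _ (actOn Γ P hP).toSMul) γ W) : {W : Submodule F V // P W}).1
      = γ.1 W.1 := rfl

lemma burnside [Fintype V] (Γ : Subgroup ((Submodule F V) ≃o (Submodule F V)))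
    [Fintype ↥Γ] (P : Submodule F V → Prop)
    (hP : ∀ g : (Submodule F V) ≃o (Submodule F V), g ∈ Γ → ∀ W, P W → P (g W)) :
    (∑ γ : ↥Γ, Nat.card {W : Submodule F V // P W ∧ γ.1 W = W})
      = Nat.card (Quotient (@MulAction.orbitRel ↥Γ {W : Submodule F V // P W} _
          (actOn Γ P hP))) * Nat.card ↥Γ := by
  classical
  letI := actOn Γ P hP
  letI : Fintype {W : Submodule F V // P W} := Fintype.ofFinite _
  have hb := MulAction.sum_card_fixedBy_eq_card_orbits_mul_card_group
    ↥Γ {W : Submodule F V // P W}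
  have hconv : ∀ γ : ↥Γ, Fintype.card (MulAction.fixedBy {W : Submodule F V // P W} γ)
      = Nat.card {W : Submodule F V // P W ∧ γ.1 W = W} := by
    intro γ
    rw [← Nat.card_eq_fintype_card]
    apply Nat.card_congr
    refine (Equiv.subtypeEquivRight (fun y => ?_)).trans
      (Equiv.subtypeSubtypeEquivSubtypeInter P (fun W => γ.1 W = W))
    rw [MulAction.mem_fixedBy]
    exact ⟨fun h => congrArg Subtype.val h, fun h => Subtype.ext h⟩
  rw [Finset.sum_congr rfl (fun γ _ => hconv γ)] at hb
  rw [hb, Nat.card_eq_fintype_card, Nat.card_eq_fintype_card]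

lemma orbit_exists_of_card_one [Fintype V] (Γ : Subgroup ((Submodule F V) ≃o (Submodule F V)))
    (P : Submodule F V → Prop)
    (hP : ∀ g : (Submodule F V) ≃o (Submodule F V), g ∈ Γ → ∀ W, P W → P (g W))
    (h1 : Nat.card (Quotient (@MulAction.orbitRel ↥Γ {W : Submodule F V // P W} _
          (actOn Γ P hP))) = 1)
    (W W' : Submodule F V) (hW : P W) (hW' : P W') : ∃ g ∈ Γ, g W = W' := by
  letI := actOn Γ P hP
  obtain ⟨hsub, hne⟩ := Nat.card_eq_one_iff_unique.mp h1
  have heq : Quotient.mk (MulAction.orbitRel ↥Γ {W : Submodule F V // P W}) ⟨W', hW'⟩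
      = Quotient.mk _ ⟨W, hW⟩ := Subsingleton.elim _ _
  obtain ⟨γ, hγ⟩ := MulAction.mem_orbit_iff.mp (MulAction.orbitRel_apply.mp (Quotient.exact heq))
  exact ⟨γ.1, γ.2, congrArg Subtype.val hγ⟩

lemma orbit_card_one_of_trans [Fintype V] (Γ : Subgroup ((Submodule F V) ≃o (Submodule F V)))
    (P : Submodule F V → Prop)
    (hP : ∀ g : (Submodule F V) ≃o (Submodule F V), g ∈ Γ → ∀ W, P W → P (g W))
    (hne : ∃ W, P W)
    (htrans : ∀ W W', P W → P W' → ∃ g ∈ Γ, g W = W') :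
    Nat.card (Quotient (@MulAction.orbitRel ↥Γ {W : Submodule F V // P W} _
          (actOn Γ P hP))) = 1 := by
  letI := actOn Γ P hP
  rw [Nat.card_eq_one_iff_unique]
  obtain ⟨W₀, hW₀⟩ := hne
  constructor
  · constructor
    intro a b
    induction a using Quotient.ind with
    | _ y =>
      induction b using Quotient.ind with
      | _ y' =>
        apply Quotient.sound
        obtain ⟨g, hgΓ, hg⟩ := htrans y'.1 y.1 y'.2 y.2
        exact MulAction.orbitRel_apply.mpr
          (MulAction.mem_orbit_iff.mpr ⟨⟨g, hgΓ⟩, Subtype.ext hg⟩)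
  · exact ⟨Quotient.mk _ ⟨W₀, hW₀⟩⟩

/-- The stabilizer of `p` inside `G`. -/
def stab (G : Subgroup ((Submodule F V) ≃o (Submodule F V))) (p : Submodule F V) :
    Subgroup ((Submodule F V) ≃o (Submodule F V)) where
  carrier := {g | g ∈ G ∧ g p = p}
  one_mem' := ⟨G.one_mem, rfl⟩
  mul_mem' := by
    rintro a b ⟨haG, hap⟩ ⟨hbG, hbp⟩
    refine ⟨G.mul_mem haG hbG, ?_⟩
    show a (b p) = p
    rw [hbp, hap]
  inv_mem' := by
    rintro a ⟨haG, hap⟩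
    refine ⟨G.inv_mem haG, ?_⟩
    show a.symm p = p
    exact (OrderIso.symm_apply_eq a).mpr hap.symm

lemma mem_stab {G : Subgroup ((Submodule F V) ≃o (Submodule F V))} {p : Submodule F V}
    {g : (Submodule F V) ≃o (Submodule F V)} : g ∈ stab G p ↔ g ∈ G ∧ g p = p := Iff.rfl

lemma exists_hyp_off [Fintype F] [Fintype V] (p : Submodule F V) (hp : finrank F p = 1)
    (hn : 2 ≤ finrank F V) :
    ∃ H : Submodule F V, finrank F H = finrank F V - 1 ∧ ¬ p ≤ H := by
  by_contra hcon
  push_neg at hcon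
  have he : {H : Submodule F V // finrank F H = finrank F V - 1 ∧ (⊥ : Submodule F V) ≤ H}
      ≃ {H : Submodule F V // finrank F H = finrank F V - 1 ∧ p ≤ H} :=
    Equiv.subtypeEquivRight (fun H => ⟨fun h => ⟨h.1, hcon H h.1⟩, fun h => ⟨h.1, bot_le⟩⟩)
  have h1 := hc_spec (⊥ : Submodule F V) (by omega)
  have h2 := hc_spec p (by omega)
  rw [Nat.card_congr he, h2] at h1
  rw [hp, finrank_bot] at h1
  have hq : 1 < Fintype.card F := Fintype.one_lt_card
  have hlt : Fintype.card F ^ (finrank F V - 1) < Fintype.card F ^ (finrank F V - 0) :=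
    Nat.pow_lt_pow_right hq (by omega)
  have h3 : 1 ≤ Fintype.card F ^ (finrank F V - 1) := Nat.one_le_pow _ _ (by omega)
  omega

lemma rel_iff (Γ : Subgroup ((Submodule F V) ≃o (Submodule F V))) (P : Submodule F V → Prop)
    (hP : ∀ g : (Submodule F V) ≃o (Submodule F V), g ∈ Γ → ∀ W, P W → P (g W))
    (a b : {W : Submodule F V // P W}) :
    (Quotient.mk (@MulAction.orbitRel ↥Γ {W : Submodule F V // P W} _ (actOn Γ P hP)) a
      = Quotient.mk (@MulAction.orbitRel ↥Γ {W : Submodule F V // P W} _ (actOn Γ P hP)) b)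
    ↔ ∃ γ : ↥Γ, γ.1 a.1 = b.1 := by
  letI := actOn Γ P hP
  constructor
  · intro h
    obtain ⟨γ, hγ⟩ := MulAction.mem_orbit_iff.mp (MulAction.orbitRel_apply.mp (Quotient.exact h))
    refine ⟨γ⁻¹, ?_⟩
    have hv : γ.1 b.1 = a.1 := congrArg Subtype.val hγ
    show (γ.1).symm a.1 = b.1
    rw [← hv, OrderIso.symm_apply_apply]
  · rintro ⟨γ, hγ⟩
    apply Quotient.sound
    refine MulAction.orbitRel_apply.mpr (MulAction.mem_orbit_iff.mpr ⟨γ⁻¹, Subtype.ext ?_⟩)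
    show (γ.1).symm b.1 = a.1
    rw [← hγ, OrderIso.symm_apply_apply]

lemma line_orbit_map (G : Subgroup ((Submodule F V) ≃o (Submodule F V))) (p : Submodule F V)
    (hp : finrank F p = 1)
    (hP1 : ∀ g : (Submodule F V) ≃o (Submodule F V), g ∈ stab G p → ∀ W : Submodule F V,
      (finrank F W = 1 ∧ W ≠ p) → (finrank F ↥(g W) = 1 ∧ g W ≠ p))
    (hP2 : ∀ g : (Submodule F V) ≃o (Submodule F V), g ∈ stab G p → ∀ W : Submodule F V,
      (p ≤ W ∧ finrank F W = 2) → (p ≤ g W ∧ finrank F ↥(g W) = 2)) :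
    ∃ s : Quotient (@MulAction.orbitRel ↥(stab G p)
          {W : Submodule F V // finrank F W = 1 ∧ W ≠ p} _ (actOn (stab G p) _ hP1)) →
        Quotient (@MulAction.orbitRel ↥(stab G p)
          {W : Submodule F V // p ≤ W ∧ finrank F W = 2} _ (actOn (stab G p) _ hP2)),
      Function.Surjective s ∧
      (Function.Injective s ↔ (∀ y y' L : Submodule F V, finrank F y = 1 → finrank F y' = 1 →
        finrank F L = 2 → p ≤ L → y ≤ L → y' ≤ L → y ≠ p → y' ≠ p →
        ∃ g ∈ stab G p, g y = y')) := by
  have hγp : ∀ γ : ↥(stab G p), γ.1 p = p := fun γ => γ.2.2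
  let lineOf : {W : Submodule F V // finrank F W = 1 ∧ W ≠ p} →
      {W : Submodule F V // p ≤ W ∧ finrank F W = 2} :=
    fun y => ⟨p ⊔ y.1, le_sup_left, rank_sup_two hp y.2.1 (Ne.symm y.2.2)⟩
  have hequi : ∀ (γ : ↥(stab G p)) (y : {W : Submodule F V // finrank F W = 1 ∧ W ≠ p}),
      γ.1 (lineOf y).1 = p ⊔ γ.1 y.1 := by
    intro γ y
    show γ.1 (p ⊔ y.1) = p ⊔ γ.1 y.1
    rw [show (γ.1 (p ⊔ y.1) : Submodule F V) = γ.1 p ⊔ γ.1 y.1 from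
      SupHomClass.map_sup γ.1 p y.1, hγp γ]
  refine ⟨Quotient.lift (fun y => Quotient.mk _ (lineOf y)) ?_, ?_, ?_, ?_⟩
  · -- well-defined
    intro y y' hyy'
    have h := Quotient.sound (s := @MulAction.orbitRel ↥(stab G p)
      {W : Submodule F V // finrank F W = 1 ∧ W ≠ p} _ (actOn (stab G p) _ hP1)) hyy'
    obtain ⟨γ, hγ⟩ := (rel_iff _ _ hP1 y y').mp h
    apply (rel_iff _ _ hP2 (lineOf y) (lineOf y')).mpr
    refine ⟨γ, ?_⟩
    show γ.1 (lineOf y).1 = (lineOf y').1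
    rw [hequi γ y, hγ]
  · -- surjective
    intro q
    obtain ⟨L, rfl⟩ := Quotient.exists_rep q
    obtain ⟨c, hcL, hc1, hcp, -⟩ := third_point L.2.2 p p
    refine ⟨Quotient.mk _ (⟨c, hc1, hcp⟩ :
      {W : Submodule F V // finrank F W = 1 ∧ W ≠ p}), ?_⟩
    show Quotient.mk _ (lineOf ⟨c, hc1, hcp⟩) = Quotient.mk _ L
    have hL : lineOf ⟨c, hc1, hcp⟩ = L :=
      Subtype.ext (line_eq hp hc1 (Ne.symm hcp) L.2.1 hcL L.2.2)
    rw [hL]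
  · -- injective → transitivity on punctured lines through p
    intro hinj y y' L hy hy' hL hpL hyL hy'L hyp hy'p
    have e1 : lineOf ⟨y, hy, hyp⟩ = ⟨L, hpL, hL⟩ :=
      Subtype.ext (line_eq hp hy (Ne.symm hyp) hpL hyL hL)
    have e2 : lineOf ⟨y', hy', hy'p⟩ = ⟨L, hpL, hL⟩ :=
      Subtype.ext (line_eq hp hy' (Ne.symm hy'p) hpL hy'L hL)
    have h2 : Quotient.mk (@MulAction.orbitRel ↥(stab G p)
          {W : Submodule F V // finrank F W = 1 ∧ W ≠ p} _ (actOn (stab G p) _ hP1))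
          (⟨y, hy, hyp⟩ : {W : Submodule F V // finrank F W = 1 ∧ W ≠ p})
        = Quotient.mk _ (⟨y', hy', hy'p⟩ : {W : Submodule F V // finrank F W = 1 ∧ W ≠ p}) := by
      apply hinj
      show Quotient.mk _ (lineOf ⟨y, hy, hyp⟩) = Quotient.mk _ (lineOf ⟨y', hy', hy'p⟩)
      rw [e1, e2]
    obtain ⟨γ, hγ⟩ := (rel_iff _ _ hP1 ⟨y, hy, hyp⟩ ⟨y', hy', hy'p⟩).mp h2
    exact ⟨γ.1, γ.2, hγ⟩
  · -- transitivity → injective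
    intro hQ a b hab
    obtain ⟨y, rfl⟩ := Quotient.exists_rep a
    obtain ⟨y', rfl⟩ := Quotient.exists_rep b
    have hab' : Quotient.mk (@MulAction.orbitRel ↥(stab G p)
          {W : Submodule F V // p ≤ W ∧ finrank F W = 2} _ (actOn (stab G p) _ hP2))
          (lineOf y) = Quotient.mk _ (lineOf y') := hab
    obtain ⟨γ, hγ⟩ := (rel_iff _ _ hP2 (lineOf y) (lineOf y')).mp hab'
    have hγval : γ.1 (p ⊔ y.1) = p ⊔ y'.1 := hγ
    have hz1 : finrank F ↥(γ.1 y.1) = 1 := by rw [finrank_orderIso]; exact y.2.1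
    have hzL : γ.1 y.1 ≤ p ⊔ y'.1 := by
      rw [← hγval]
      exact γ.1.monotone le_sup_right
    have hzp : γ.1 y.1 ≠ p := by
      intro hc
      apply y.2.2
      apply γ.1.injective
      rw [hγp γ]
      exact hc
    have hrk2 : finrank F ↥(p ⊔ y'.1) = 2 := rank_sup_two hp y'.2.1 (Ne.symm y'.2.2)
    obtain ⟨g, hgΓ, hgz⟩ := hQ (γ.1 y.1) y'.1 (p ⊔ y'.1) hz1 y'.2.1 hrk2
      le_sup_left hzL le_sup_right hzp y'.2.2
    apply (rel_iff _ _ hP1 y y').mpr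
    refine ⟨⟨g, hgΓ⟩ * γ, ?_⟩
    show g (γ.1 y.1) = y'.1
    exact hgz

lemma master [Fintype F] [Fintype V] (G : Subgroup ((Submodule F V) ≃o (Submodule F V)))
    (p : Submodule F V) (hp : finrank F p = 1) (hn2 : 2 ≤ finrank F V) :
    (∀ H H' : Submodule F V, finrank F H = finrank F V - 1 → ¬ p ≤ H →
        finrank F H' = finrank F V - 1 → ¬ p ≤ H' → ∃ g ∈ G, g p = p ∧ g H = H')
    ↔ (∀ y y' L : Submodule F V, finrank F y = 1 → finrank F y' = 1 → finrank F L = 2 →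
        p ≤ L → y ≤ L → y' ≤ L → y ≠ p → y' ≠ p → ∃ g ∈ G, g p = p ∧ g y = y') := by
  classical
  haveI : Finite ((Submodule F V) ≃o (Submodule F V)) :=
    Finite.of_injective (fun g => (g : Submodule F V → Submodule F V)) DFunLike.coe_injective
  letI : Fintype ↥(stab G p) := Fintype.ofFinite _
  have hγp : ∀ γ : ↥(stab G p), γ.1 p = p := fun γ => γ.2.2
  have hgsymm : ∀ g : (Submodule F V) ≃o (Submodule F V), g p = p → g.symm p = p :=
    fun g hg => (OrderIso.symm_apply_eq g).mpr hg.symm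
  -- invariance of the predicates
  have hPpt : ∀ g : (Submodule F V) ≃o (Submodule F V), g ∈ stab G p → ∀ W : Submodule F V,
      finrank F W = 1 → finrank F ↥(g W) = 1 := fun g _ W hW => by
    rw [finrank_orderIso]; exact hW
  have hPHy : ∀ g : (Submodule F V) ≃o (Submodule F V), g ∈ stab G p → ∀ W : Submodule F V,
      finrank F W = finrank F V - 1 → finrank F ↥(g W) = finrank F V - 1 := fun g _ W hW => by
    rw [finrank_orderIso]; exact hW
  have hPpt' : ∀ g : (Submodule F V) ≃o (Submodule F V), g ∈ stab G p → ∀ W : Submodule F V,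
      (finrank F W = 1 ∧ W ≠ p) → (finrank F ↥(g W) = 1 ∧ g W ≠ p) := fun g hg W hW =>
    ⟨by rw [finrank_orderIso]; exact hW.1,
      fun hc => hW.2 (g.injective (hc.trans hg.2.symm))⟩
  have hPA : ∀ g : (Submodule F V) ≃o (Submodule F V), g ∈ stab G p → ∀ W : Submodule F V,
      (p ≤ W ∧ finrank F W = 2) → (p ≤ g W ∧ finrank F ↥(g W) = 2) := fun g hg W hW =>
    ⟨by have h := g.monotone hW.1; rwa [hg.2] at h,
      by rw [finrank_orderIso]; exact hW.2⟩
  have hPB' : ∀ g : (Submodule F V) ≃o (Submodule F V), g ∈ stab G p → ∀ W : Submodule F V,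
      (finrank F W = finrank F V - 1 ∧ p ≤ W) →
        (finrank F ↥(g W) = finrank F V - 1 ∧ p ≤ g W) := fun g hg W hW =>
    ⟨by rw [finrank_orderIso]; exact hW.1,
      by have h := g.monotone hW.2; rwa [hg.2] at h⟩
  have hPB : ∀ g : (Submodule F V) ≃o (Submodule F V), g ∈ stab G p → ∀ W : Submodule F V,
      (finrank F W = finrank F V - 1 ∧ ¬ p ≤ W) →
        (finrank F ↥(g W) = finrank F V - 1 ∧ ¬ p ≤ g W) := fun g hg W hW =>
    ⟨by rw [finrank_orderIso]; exact hW.1, by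
      intro hc
      apply hW.2
      have h2 := g.symm.monotone hc
      rw [g.symm_apply_apply, hgsymm g hg.2] at h2
      exact h2⟩
  -- Burnside counts
  have bPt := burnside (stab G p) (fun W => finrank F W = 1) hPpt
  have bHy := burnside (stab G p) (fun W => finrank F W = finrank F V - 1) hPHy
  have bPt' := burnside (stab G p) (fun W => finrank F W = 1 ∧ W ≠ p) hPpt'
  have bA := burnside (stab G p) (fun W => p ≤ W ∧ finrank F W = 2) hPA
  have bB' := burnside (stab G p) (fun W => finrank F W = finrank F V - 1 ∧ p ≤ W) hPB'
  have bB := burnside (stab G p) (fun W => finrank F W = finrank F V - 1 ∧ ¬ p ≤ W) hPB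
  set N := Nat.card ↥(stab G p) with hN
  have hNpos : 0 < N := Nat.card_pos
  set oPt := Nat.card (Quotient (@MulAction.orbitRel ↥(stab G p)
    {W : Submodule F V // finrank F W = 1} _ (actOn _ _ hPpt))) with hoPt
  set oHy := Nat.card (Quotient (@MulAction.orbitRel ↥(stab G p)
    {W : Submodule F V // finrank F W = finrank F V - 1} _ (actOn _ _ hPHy))) with hoHy
  set oPt' := Nat.card (Quotient (@MulAction.orbitRel ↥(stab G p)
    {W : Submodule F V // finrank F W = 1 ∧ W ≠ p} _ (actOn _ _ hPpt'))) with hoPt'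
  set oA := Nat.card (Quotient (@MulAction.orbitRel ↥(stab G p)
    {W : Submodule F V // p ≤ W ∧ finrank F W = 2} _ (actOn _ _ hPA))) with hoA
  set oB' := Nat.card (Quotient (@MulAction.orbitRel ↥(stab G p)
    {W : Submodule F V // finrank F W = finrank F V - 1 ∧ p ≤ W} _ (actOn _ _ hPB'))) with hoB'
  set oB := Nat.card (Quotient (@MulAction.orbitRel ↥(stab G p)
    {W : Submodule F V // finrank F W = finrank F V - 1 ∧ ¬ p ≤ W} _ (actOn _ _ hPB))) with hoB
  -- pointwise identities
  have perPt : ∀ γ : ↥(stab G p),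
      Nat.card {W : Submodule F V // finrank F W = 1 ∧ γ.1 W = W}
      = 1 + Nat.card {W : Submodule F V // (finrank F W = 1 ∧ W ≠ p) ∧ γ.1 W = W} := by
    intro γ
    rw [ncard_split (fun W : Submodule F V => finrank F W = 1 ∧ γ.1 W = W) (fun W => W = p)]
    congr 1
    · exact ncard_singleton _ p ⟨⟨hp, hγp γ⟩, rfl⟩ (fun a ha => ha.2)
    · exact Nat.card_congr (Equiv.subtypeEquivRight (fun W => by tauto))
  have perHy : ∀ γ : ↥(stab G p),
      Nat.card {W : Submodule F V // finrank F W = finrank F V - 1 ∧ γ.1 W = W}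
      = Nat.card {W : Submodule F V // (finrank F W = finrank F V - 1 ∧ p ≤ W) ∧ γ.1 W = W}
        + Nat.card {W : Submodule F V //
            (finrank F W = finrank F V - 1 ∧ ¬ p ≤ W) ∧ γ.1 W = W} := by
    intro γ
    rw [ncard_split (fun W : Submodule F V => finrank F W = finrank F V - 1 ∧ γ.1 W = W)
      (fun W => p ≤ W)]
    congr 1 <;> exact Nat.card_congr (Equiv.subtypeEquivRight (fun W => by tauto))
  have perCoreBot : ∀ γ : ↥(stab G p),
      Nat.card {W : Submodule F V // finrank F W = 1 ∧ γ.1 W = W}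
      = Nat.card {W : Submodule F V // finrank F W = finrank F V - 1 ∧ γ.1 W = W} := by
    intro γ
    have hcore := core (⊥ : Submodule F V) 0 (finrank_bot F V) (by omega) γ.1 (map_bot γ.1)
    rw [show Nat.card {W : Submodule F V // finrank F W = 1 ∧ γ.1 W = W}
        = Nat.card {W : Submodule F V //
            ((⊥ : Submodule F V) ≤ W ∧ finrank F W = 0 + 1) ∧ γ.1 W = W} from
      Nat.card_congr (Equiv.subtypeEquivRight (fun W => by
        constructor
        · rintro ⟨h1, h2⟩; exact ⟨⟨bot_le, by omega⟩, h2⟩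
        · rintro ⟨⟨h0, h1⟩, h2⟩; exact ⟨by omega, h2⟩)), hcore]
    exact Nat.card_congr (Equiv.subtypeEquivRight (fun H => by
      constructor
      · rintro ⟨⟨h1, h0⟩, h2⟩; exact ⟨h1, h2⟩
      · rintro ⟨h1, h2⟩; exact ⟨⟨h1, bot_le⟩, h2⟩))
  have perCoreA : ∀ γ : ↥(stab G p),
      Nat.card {W : Submodule F V // (p ≤ W ∧ finrank F W = 2) ∧ γ.1 W = W}
      = Nat.card {W : Submodule F V //
          (finrank F W = finrank F V - 1 ∧ p ≤ W) ∧ γ.1 W = W} := by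
    intro γ
    rcases Nat.lt_or_ge (finrank F V) 3 with h3 | h3
    · have hn2' : finrank F V = 2 := by omega
      rw [ncard_singleton _ (⊤ : Submodule F V)
          ⟨⟨le_top, by rw [finrank_top]; omega⟩, map_top γ.1⟩
          (fun a ha => Submodule.eq_top_of_finrank_eq (by have := ha.1.2; omega)),
        ncard_singleton _ p ⟨⟨by omega, le_rfl⟩, hγp γ⟩
          (fun a ha => (eq_of_le_of_finrank_le ha.1.2 (by have := ha.1.1; omega)).symm)]
    · have hcore := core p 1 hp (by omega) γ.1 (hγp γ)
      rw [← hcore]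
  -- summed identities
  have hkey0 : N + oPt' * N = oB' * N + oB * N := by
    have e1 : oPt * N = N + oPt' * N := by
      rw [← bPt, ← bPt', Finset.sum_congr rfl (fun γ _ => perPt γ), Finset.sum_add_distrib,
        Finset.sum_const, Finset.card_univ, smul_eq_mul, mul_one, hN, Nat.card_eq_fintype_card]
    have e2 : oPt * N = oHy * N := by
      rw [← bPt, ← bHy, Finset.sum_congr rfl (fun γ _ => perCoreBot γ)]
    have e3 : oHy * N = oB' * N + oB * N := by
      rw [← bHy, ← bB', ← bB, Finset.sum_congr rfl (fun γ _ => perHy γ),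
        Finset.sum_add_distrib]
    rw [← e1, e2, e3]
  have hkey1 : 1 + oPt' = oB' + oB := by
    refine Nat.eq_of_mul_eq_mul_right hNpos ?_
    rw [Nat.add_mul, Nat.add_mul, one_mul]
    exact hkey0
  have hkey2 : oA = oB' := by
    refine Nat.eq_of_mul_eq_mul_right hNpos ?_
    rw [← bA, ← bB', Finset.sum_congr rfl (fun γ _ => perCoreA γ)]
  -- the orbit map between punctured points and lines through p
  obtain ⟨s, hssurj, hsiff⟩ := line_orbit_map G p hp hPpt' hPA
  -- B is nonempty
  obtain ⟨H₁, hH₁, hpH₁⟩ := exists_hyp_off p hp hn2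
  constructor
  · -- P2 → Q1
    intro hP2
    have hBone : oB = 1 := by
      rw [hoB]
      refine orbit_card_one_of_trans _ _ hPB ⟨H₁, hH₁, hpH₁⟩ ?_
      rintro H H' ⟨hH, hpH⟩ ⟨hH', hpH'⟩
      obtain ⟨g, hgG, hgp, hgH⟩ := hP2 H H' hH hpH hH' hpH'
      exact ⟨g, mem_stab.mpr ⟨hgG, hgp⟩, hgH⟩
    have hcards : oPt' = oA := by omega
    have hsinj : Function.Injective s := inj_of_surj_ncard s hssurj (by
      rw [← hoPt', ← hoA]; exact hcards)
    intro y y' L hy hy' hL hpL hyL hy'L hyp hy'p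
    obtain ⟨g, hgΓ, hgy⟩ := (hsiff.mp hsinj) y y' L hy hy' hL hpL hyL hy'L hyp hy'p
    exact ⟨g, (mem_stab.mp hgΓ).1, (mem_stab.mp hgΓ).2, hgy⟩
  · -- Q1 → P2
    intro hQ1
    have hsinj : Function.Injective s := hsiff.mpr (by
      intro y y' L hy hy' hL hpL hyL hy'L hyp hy'p
      obtain ⟨g, hgG, hgp, hgy⟩ := hQ1 y y' L hy hy' hL hpL hyL hy'L hyp hy'p
      exact ⟨g, mem_stab.mpr ⟨hgG, hgp⟩, hgy⟩)
    have hcards : oPt' = oA := by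
      rw [hoPt', hoA]
      exact Nat.card_eq_of_bijective s ⟨hsinj, hssurj⟩
    have hBone : oB = 1 := by omega
    intro H H' hH hpH hH' hpH'
    obtain ⟨g, hgΓ, hgH⟩ := orbit_exists_of_card_one _ _ hPB (hoB ▸ hBone) H H'
      ⟨hH, hpH⟩ ⟨hH', hpH'⟩
    exact ⟨g, (mem_stab.mp hgΓ).1, (mem_stab.mp hgΓ).2, hgH⟩

end AntiflagAux

open Module

/-- A subgroup `G` of the collineation group of `PG(n-1,q)` is transitive on
antiflags (pairs of a hyperplane and a point off it) if and only if for every line `L`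
the group induced by the stabilizer of `L` acts 2-transitively on the points of `L`. -/
theorem antiflag_transitive_iff_two_transitive_on_lines
    (F : Type*) [Field F] [Fintype F] (q n : ℕ) (hq : Fintype.card F = q)
    (V : Type*) [AddCommGroup V] [Module F V] [FiniteDimensional F V]
    (hn : finrank F V = n) (hn2 : 2 ≤ n)
    (G : Subgroup ((Submodule F V) ≃o (Submodule F V))) :
    (∀ H x H' x' : Submodule F V,
        finrank F H = n - 1 → finrank F x = 1 → ¬ x ≤ H →
        finrank F H' = n - 1 → finrank F x' = 1 → ¬ x' ≤ H' →
        ∃ g ∈ G, g H = H' ∧ g x = x') ↔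
    (∀ L : Submodule F V, finrank F L = 2 →
        ∀ x y x' y' : Submodule F V,
          finrank F x = 1 → finrank F y = 1 → finrank F x' = 1 → finrank F y' = 1 →
          x ≤ L → y ≤ L → x' ≤ L → y' ≤ L → x ≠ y → x' ≠ y' →
          ∃ g ∈ G, g L = L ∧ g x = x' ∧ g y = y') := by
  classical
  subst hn
  haveI : Finite V := Module.finite_of_finite F
  letI : Fintype V := Fintype.ofFinite V
  constructor
  · -- antiflag transitivity implies 2-transitivity on every line
    intro hL
    have hQ1 : ∀ p : Submodule F V, finrank F p = 1 →
        ∀ y y' L : Submodule F V, finrank F y = 1 → finrank F y' = 1 → finrank F L = 2 →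
          p ≤ L → y ≤ L → y' ≤ L → y ≠ p → y' ≠ p → ∃ g ∈ G, g p = p ∧ g y = y' := by
      intro p hp
      refine (AntiflagAux.master G p hp hn2).mp ?_
      intro H H' hH hpH hH' hpH'
      obtain ⟨g, hgG, hgH, hgp⟩ := hL H p H' p hH hp hpH hH' hp hpH'
      exact ⟨g, hgG, hgp, hgH⟩
    intro L hL2 x y x' y' hx hy hx' hy' hxL hyL hx'L hy'L hxy hx'y'
    obtain ⟨b, hbL, hb1, hbx, hbx'⟩ := AntiflagAux.third_point hL2 x x'
    obtain ⟨g1, hg1G, hg1b, hg1x⟩ := hQ1 b hb1 x x' L hx hx' hL2 hbL hxL hx'L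
      (Ne.symm hbx) (Ne.symm hbx')
    have hg1L : g1 L = L := by
      have e1 : b ⊔ x = L := AntiflagAux.line_eq hb1 hx hbx hbL hxL hL2
      have e2 : b ⊔ x' = L := AntiflagAux.line_eq hb1 hx' hbx' hbL hx'L hL2
      calc g1 L = g1 (b ⊔ x) := by rw [e1]
        _ = g1 b ⊔ g1 x := SupHomClass.map_sup g1 b x
        _ = b ⊔ x' := by rw [hg1b, hg1x]
        _ = L := e2
    have hy2L : g1 y ≤ L := by
      have h := g1.monotone hyL
      rwa [hg1L] at h
    have hy2 : finrank F ↥(g1 y) = 1 := by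
      rw [AntiflagAux.finrank_orderIso]; exact hy
    have hy2x' : g1 y ≠ x' := by
      intro hc
      exact hxy (g1.injective (hg1x ▸ hc : g1 y = g1 x)).symm
    obtain ⟨g2, hg2G, hg2x', hg2y⟩ := hQ1 x' hx' (g1 y) y' L hy2 hy' hL2 hx'L hy2L hy'L
      hy2x' (Ne.symm hx'y')
    have hg2L : g2 L = L := by
      have e1 : x' ⊔ g1 y = L := AntiflagAux.line_eq hx' hy2 (Ne.symm hy2x') hx'L hy2L hL2
      have e2 : x' ⊔ y' = L := AntiflagAux.line_eq hx' hy' hx'y' hx'L hy'L hL2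
      calc g2 L = g2 (x' ⊔ g1 y) := by rw [e1]
        _ = g2 x' ⊔ g2 (g1 y) := SupHomClass.map_sup g2 x' (g1 y)
        _ = x' ⊔ y' := by rw [hg2x', hg2y]
        _ = L := e2
    refine ⟨g2 * g1, G.mul_mem hg2G hg1G, ?_, ?_, ?_⟩
    · show g2 (g1 L) = L
      rw [hg1L, hg2L]
    · show g2 (g1 x) = x'
      rw [hg1x, hg2x']
    · show g2 (g1 y) = y'
      exact hg2y
  · -- 2-transitivity on lines implies antiflag transitivity
    intro hR
    have hP1 : ∀ x x' : Submodule F V, finrank F x = 1 → finrank F x' = 1 →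
        ∃ g ∈ G, g x = x' := by
      intro x x' hx hx'
      rcases eq_or_ne x x' with rfl | hne
      · exact ⟨1, G.one_mem, rfl⟩
      · have hL2 : finrank F ↥(x ⊔ x') = 2 := AntiflagAux.rank_sup_two hx hx' hne
        obtain ⟨g, hgG, hgL, hgx, hgy⟩ := hR (x ⊔ x') hL2 x x' x' x hx hx' hx' hx
          le_sup_left le_sup_right le_sup_right le_sup_left hne (Ne.symm hne)
        exact ⟨g, hgG, hgx⟩
    have hP2 : ∀ p : Submodule F V, finrank F p = 1 →
        ∀ H H' : Submodule F V, finrank F H = finrank F V - 1 → ¬ p ≤ H →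
          finrank F H' = finrank F V - 1 → ¬ p ≤ H' → ∃ g ∈ G, g p = p ∧ g H = H' := by
      intro p hp
      refine (AntiflagAux.master G p hp hn2).mpr ?_
      intro y y' L hy hy' hL hpL hyL hy'L hyp hy'p
      obtain ⟨g, hgG, hgL, hgp, hgy⟩ := hR L hL p y p y' hp hy hp hy' hpL hyL hpL hy'L
        (Ne.symm hyp) (Ne.symm hy'p)
      exact ⟨g, hgG, hgp, hgy⟩
    intro H x H' x' hH hx hxH hH' hx' hx'H'
    obtain ⟨g1, hg1G, hg1x⟩ := hP1 x x' hx hx'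
    have hH'' : finrank F ↥(g1 H) = finrank F V - 1 := by
      rw [AntiflagAux.finrank_orderIso]; exact hH
    have hx'H'' : ¬ x' ≤ g1 H := by
      intro hc
      apply hxH
      rw [← hg1x] at hc
      exact g1.le_iff_le.mp hc
    obtain ⟨g2, hg2G, hg2x', hg2H⟩ := hP2 x' hx' (g1 H) H' hH'' hx'H'' hH' hx'H'
    refine ⟨g2 * g1, G.mul_mem hg2G hg1G, ?_, ?_⟩
    · show g2 (g1 H) = H'
      exact hg2H
    · show g2 (g1 x) = x'
      rw [hg1x]
      exact hg2x'
end

section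
/- Let G ≤ ΓL(n,q) be antiflag transitive but not 2-transitive on the points of PG(n-1,q). Then for every point x there is a proper subspace W(x) with x ⊊ W(x) ⊊ V, such that G_x fixes W(x) and G_x acts transitively on the set of points of V not in W(x). -/
open Module

namespace AFT

section Action

variable {F : Type*} [Field F] {V : Type*} [AddCommGroup V] [Module F V]

instance latticeAction : MulAction (Submodule F V ≃o Submodule F V) (Submodule F V) where
  smul g x := g x
  one_smul _ := rfl
  mul_smul _ _ _ := rfl

lemma pgroup_of_injective {p : ℕ} {G H : Type*} [Group G] [Group H] (f : H →* G)
    (hf : Function.Injective f) (h : IsPGroup p G) : IsPGroup p H := by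
  intro g
  obtain ⟨k, hk⟩ := h (f g)
  exact ⟨k, hf (by rw [map_pow, hk, map_one])⟩

end Action

section FD

variable {F : Type*} [Field F] {V : Type*} [AddCommGroup V] [Module F V] [FiniteDimensional F V]

lemma finrank_eq_one_iff_isAtom {x : Submodule F V} :
    finrank F x = 1 ↔ IsAtom x := by
  constructor
  · intro h
    constructor
    · rintro rfl; rw [finrank_bot] at h; omega
    · intro y hy
      have h2 := Submodule.finrank_lt_finrank_of_lt hy
      rw [h] at h2
      exact Submodule.finrank_eq_zero.mp (by omega)
  · intro h
    obtain ⟨v, hv, hv0⟩ := Submodule.ne_bot_iff _ |>.mp h.1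
    have hle : Submodule.span F {v} ≤ x := Submodule.span_singleton_le_iff_mem _ _ |>.mpr hv
    have hsp : Submodule.span F {v} = x := by
      rcases lt_or_eq_of_le hle with h' | h'
      · exact absurd (h.2 _ h') (by simpa [Submodule.span_singleton_eq_bot] using hv0)
      · exact h'
    rw [← hsp, finrank_span_singleton hv0]

lemma finrank_eq_coatom_iff (h1 : 1 ≤ finrank F V) {x : Submodule F V} :
    finrank F x = finrank F V - 1 ↔ IsCoatom x := by
  constructor
  · intro h
    constructor
    · intro htop
      rw [htop, finrank_top] at h; omega
    · intro y hy
      have hlt := Submodule.finrank_lt_finrank_of_lt hy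
      have hyle := Submodule.finrank_le y
      exact Submodule.eq_top_of_finrank_eq (by omega)
  · intro h
    have hxle : finrank F x ≤ finrank F V := Submodule.finrank_le x
    have hxlt : finrank F x < finrank F V := by
      rcases lt_or_eq_of_le hxle with h' | h'
      · exact h'
      · exact absurd (Submodule.eq_top_of_finrank_eq h') h.1
    by_contra hne
    have hxlt2 : finrank F x < finrank F V - 1 := by omega
    obtain ⟨v, -, hv⟩ := SetLike.exists_of_lt (lt_top_iff_ne_top.mpr h.1)
    have hv0 : v ≠ 0 := fun h0 => hv (h0 ▸ x.zero_mem)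
    have hlt : x < x ⊔ Submodule.span F {v} :=
      SetLike.lt_iff_le_and_exists.mpr ⟨le_sup_left, v,
        Submodule.mem_sup_right (Submodule.mem_span_singleton_self v), hv⟩
    have htop := h.2 _ hlt
    have hsum := Submodule.finrank_sup_add_finrank_inf_eq x (Submodule.span F {v})
    rw [htop, finrank_top, finrank_span_singleton hv0] at hsum
    omega

lemma map_finrank_one (g : Submodule F V ≃o Submodule F V) {x : Submodule F V}
    (h : finrank F x = 1) : finrank F (g x) = 1 := by
  rw [finrank_eq_one_iff_isAtom] at h ⊢
  exact (OrderIso.isAtom_iff g x).mpr h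

lemma map_finrank_coatom (g : Submodule F V ≃o Submodule F V) (h1 : 1 ≤ finrank F V)
    {x : Submodule F V} (h : finrank F x = finrank F V - 1) :
    finrank F (g x) = finrank F V - 1 := by
  rw [finrank_eq_coatom_iff h1] at h ⊢
  exact (OrderIso.isCoatom_iff g x).mpr h

lemma rank1_le_iff {a b : Submodule F V} (ha : finrank F a = 1) (hb : finrank F b = 1) :
    a ≤ b ↔ a = b :=
  ⟨fun h => Submodule.eq_of_le_of_finrank_eq h (by rw [ha, hb]), fun h => h.le⟩

end FD

section Counting

variable (F : Type*) [Field F] [Fintype F] (W : Type*) [AddCommGroup W] [Module F W] [Finite W]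

lemma card_points_not_le_mul (H : Submodule F W) :
    Nat.card {y : Submodule F W // finrank F y = 1 ∧ ¬ y ≤ H} * (Fintype.card F - 1)
      = Nat.card W - Nat.card H := by
  classical
  have hFD : FiniteDimensional F W := Module.Finite.of_finite
  letI : Fintype W := Fintype.ofFinite W
  have hfinL : Finite (Submodule F W) :=
    Finite.of_injective (fun s => (s : Set W)) SetLike.coe_injective
  letI : Fintype (Submodule F W) := Fintype.ofFinite _
  have hσaux : ∀ v : {v : W // v ∉ H},
      finrank F (Submodule.span F {v.1}) = 1 ∧ ¬ Submodule.span F {v.1} ≤ H := by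
    intro v
    have hv0 : v.1 ≠ 0 := fun h0 => v.2 (h0 ▸ H.zero_mem)
    exact ⟨finrank_span_singleton hv0,
      fun hle => v.2 (hle (Submodule.mem_span_singleton_self v.1))⟩
  set σ : {v : W // v ∉ H} → {y : Submodule F W // finrank F y = 1 ∧ ¬ y ≤ H} :=
    fun v => ⟨Submodule.span F {v.1}, hσaux v⟩ with hσ
  have hfiber : ∀ y : {y : Submodule F W // finrank F y = 1 ∧ ¬ y ≤ H},
      Nat.card {v // σ v = y} = Fintype.card F - 1 := by
    intro y
    have e : {v // σ v = y} ≃ {w : y.1 // w ≠ 0} :=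
      { toFun := fun v => ⟨⟨v.1.1, by
            have h1 : Submodule.span F {v.1.1} = y.1 := congrArg Subtype.val v.2
            exact h1 ▸ Submodule.mem_span_singleton_self v.1.1⟩, by
            intro h0
            have hval : v.1.1 = 0 := congrArg Subtype.val h0
            exact v.1.2 (hval ▸ H.zero_mem)⟩
        invFun := fun w => by
          have hw0 : w.1.1 ≠ 0 := fun h => w.2 (Subtype.ext h)
          have hspan : Submodule.span F {w.1.1} = y.1 :=
            Submodule.eq_of_le_of_finrank_eq
              (Submodule.span_singleton_le_iff_mem _ _ |>.mpr w.1.2)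
              (by rw [finrank_span_singleton hw0, y.2.1])
          have hnotH : w.1.1 ∉ H := fun hmem =>
            y.2.2 (hspan ▸ (Submodule.span_singleton_le_iff_mem _ _ |>.mpr hmem))
          exact ⟨⟨w.1.1, hnotH⟩, Subtype.ext hspan⟩
        left_inv := fun v => by apply Subtype.ext; apply Subtype.ext; rfl
        right_inv := fun w => by apply Subtype.ext; apply Subtype.ext; rfl }
    rw [Nat.card_congr e]
    letI : Fintype y.1 := Fintype.ofFinite _
    have hcy : Nat.card y.1 = Fintype.card F := by
      rw [Nat.card_eq_fintype_card, card_eq_pow_finrank (K := F), y.2.1, pow_one]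
    have h1 : Nat.card {w : y.1 // w ≠ 0} = Nat.card y.1 - Nat.card {w : y.1 // w = 0} := by
      simp only [Nat.card_eq_fintype_card]
      exact Fintype.card_subtype_compl _
    have h2 : Nat.card {w : y.1 // w = 0} = 1 := by
      simp only [Nat.card_eq_fintype_card]
      exact Fintype.card_subtype_eq (0 : y.1)
    rw [h1, h2, hcy]
  have h1 : Nat.card {v : W // v ∉ H}
      = Nat.card {y : Submodule F W // finrank F y = 1 ∧ ¬ y ≤ H} * (Fintype.card F - 1) := by
    calc Nat.card {v : W // v ∉ H}
        = Nat.card ((y : {y : Submodule F W // finrank F y = 1 ∧ ¬ y ≤ H}) × {v // σ v = y}) :=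
          Nat.card_congr (Equiv.sigmaFiberEquiv σ).symm
      _ = ∑ y : {y : Submodule F W // finrank F y = 1 ∧ ¬ y ≤ H}, Nat.card {v // σ v = y} := by
          rw [Nat.card_eq_fintype_card, Fintype.card_sigma]
          simp [Nat.card_eq_fintype_card]
      _ = ∑ _y : {y : Submodule F W // finrank F y = 1 ∧ ¬ y ≤ H}, (Fintype.card F - 1) := by
          exact Finset.sum_congr rfl fun y _ => hfiber y
      _ = Nat.card {y : Submodule F W // finrank F y = 1 ∧ ¬ y ≤ H} * (Fintype.card F - 1) := by
          rw [Finset.sum_const, smul_eq_mul, Nat.card_eq_fintype_card]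
          rfl
  have h2 : Nat.card {v : W // v ∉ H} = Nat.card W - Nat.card H := by
    simp only [Nat.card_eq_fintype_card]
    exact Fintype.card_subtype_compl _
  rw [← h1, h2]

lemma card_points_mul :
    Nat.card {y : Submodule F W // finrank F y = 1} * (Fintype.card F - 1)
      = Nat.card W - 1 := by
  have hFD : FiniteDimensional F W := Module.Finite.of_finite
  have h := card_points_not_le_mul F W ⊥
  have hbot : Nat.card (⊥ : Submodule F W) = 1 := Nat.card_unique
  have e : {y : Submodule F W // finrank F y = 1 ∧ ¬ y ≤ ⊥} ≃ {y : Submodule F W // finrank F y = 1} :=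
    Equiv.subtypeEquivRight (fun y => ⟨fun h' => h'.1, fun h' => ⟨h', fun hle => by
      rw [le_bot_iff.mp hle, finrank_bot] at h'; omega⟩⟩)
  rw [← Nat.card_congr e, h, hbot]

lemma not_dvd_card_points {p : ℕ} (hp : p.Prime) (hpq : p ∣ Fintype.card F)
    (hW : 0 < finrank F W) : ¬ p ∣ Nat.card {y : Submodule F W // finrank F y = 1} := by
  intro hdvd
  have hFD : FiniteDimensional F W := Module.Finite.of_finite
  have h := card_points_mul F W
  letI : Fintype W := Fintype.ofFinite W
  have hcardW : Nat.card W = Fintype.card F ^ finrank F W := by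
    rw [Nat.card_eq_fintype_card]; exact card_eq_pow_finrank (K := F)
  rw [hcardW] at h
  have hq1 : 1 ≤ Fintype.card F ^ finrank F W := Nat.one_le_pow _ _ Fintype.card_pos
  have hd1 : p ∣ Fintype.card F ^ finrank F W - 1 := h ▸ hdvd.mul_right _
  have hd2 : p ∣ Fintype.card F ^ finrank F W := dvd_pow hpq (by omega)
  have : p ∣ 1 := by
    have := Nat.dvd_sub hd2 hd1
    rwa [Nat.sub_sub_self hq1] at this
  exact hp.one_lt.ne' (Nat.dvd_one.mp this)

end Counting

section SylowTrans

lemma sylow_trans {K : Type*} [Group K] [Finite K] {p : ℕ} (hp : p.Prime)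
    {α : Type*} [Finite α] [MulAction K α]
    (htrans : ∀ a b : α, ∃ g : K, g • a = b)
    {m : ℕ} (hcard : Nat.card α = p ^ m) (P : Subgroup K) (hP : IsPGroup p P)
    (hPind : ¬ p ∣ P.index) (a b : α) : ∃ g ∈ P, g • a = b := by
  classical
  haveI : Fact p.Prime := ⟨hp⟩
  have horb : MulAction.orbit K a = Set.univ :=
    Set.eq_univ_of_forall fun c => MulAction.mem_orbit_iff.mpr (htrans a c)
  have hindK : (MulAction.stabilizer K a).index = p ^ m := by
    rw [MulAction.index_stabilizer, horb, Set.ncard_univ, hcard]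
  obtain ⟨k, hk'⟩ := IsPGroup.iff_card.mp hP
  obtain ⟨j, hj'⟩ := IsPGroup.iff_card.mp (hP.to_subgroup (MulAction.stabilizer P a))
  -- injective hom from stabilizer in P to stabilizer in K
  have hψ : ∀ x : MulAction.stabilizer P a, ((x.1 : K)) ∈ MulAction.stabilizer K a := by
    intro x
    have := x.2
    rw [MulAction.mem_stabilizer_iff] at this ⊢
    exact this
  let ψ : MulAction.stabilizer P a →* MulAction.stabilizer K a :=
    { toFun := fun x => ⟨(x.1 : K), hψ x⟩
      map_one' := rfl
      map_mul' := fun _ _ => rfl }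
  have hinj : Function.Injective ψ := by
    intro x y h
    have h' : ((x.1 : K)) = ((y.1 : K)) :=
      congrArg (fun z : MulAction.stabilizer K a => (z : K)) h
    apply Subtype.ext; apply Subtype.ext; exact h'
  have hdvd : Nat.card (MulAction.stabilizer P a) ∣ Nat.card (MulAction.stabilizer K a) :=
    Subgroup.card_dvd_of_injective ψ hinj
  have hKeq : Nat.card (MulAction.stabilizer K a) * p ^ m = Nat.card K := by
    rw [← hindK]; exact Subgroup.card_mul_index _
  have hPeq : Nat.card P * P.index = Nat.card K := Subgroup.card_mul_index P
  have hmj : p ^ (m + j) ∣ Nat.card K := by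
    rw [← hKeq, pow_add, mul_comm (p ^ m) (p ^ j)]
    exact Nat.mul_dvd_mul_right (hj' ▸ hdvd) _
  have hcop : Nat.Coprime (p ^ (m + j)) P.index :=
    Nat.Coprime.pow_left _ ((Nat.Prime.coprime_iff_not_dvd hp).mpr hPind)
  have hdvdP : p ^ (m + j) ∣ Nat.card P := hcop.dvd_of_dvd_mul_right (hPeq ▸ hmj)
  have hmk : m + j ≤ k := (Nat.pow_dvd_pow_iff_le_right hp.one_lt).mp (hk' ▸ hdvdP)
  -- orbit of P has full size
  have hPstab : Nat.card (MulAction.stabilizer P a) * (MulAction.stabilizer P a).index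
      = Nat.card P := Subgroup.card_mul_index _
  have hineq : p ^ m ≤ (MulAction.stabilizer P a).index := by
    by_contra hlt
    push_neg at hlt
    have : Nat.card P < p ^ j * p ^ m := by
      rw [← hPstab, hj']
      exact Nat.mul_lt_mul_of_le_of_lt le_rfl hlt (pow_pos hp.pos j)
    rw [hk', ← pow_add] at this
    exact absurd this (not_lt.mpr (Nat.pow_le_pow_right hp.one_lt.le (by omega)))
  have horbP : MulAction.orbit P a = Set.univ := by
    apply Set.eq_of_subset_of_ncard_le (Set.subset_univ _)
    rw [Set.ncard_univ, hcard, ← MulAction.index_stabilizer]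
    exact hineq
  have hb : b ∈ MulAction.orbit P a := horbP ▸ Set.mem_univ b
  obtain ⟨g, hg⟩ := MulAction.mem_orbit_iff.mp hb
  exact ⟨g.1, g.2, hg⟩

end SylowTrans

end AFT

/-- If `G ≤ ΓL(n,q)` is antiflag transitive but not 2-transitive on points,
then for every point `x` there is a proper subspace `W(x)` with `x ⊊ W(x) ⊊ V`, fixed by
`G_x`, such that `G_x` is transitive on the points of `V` not in `W(x)`. -/
theorem antiflag_transitive_not_two_transitive_invariant_subspace
    (F : Type*) [Field F] [Fintype F] (q n : ℕ) (hq : Fintype.card F = q)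
    (V : Type*) [AddCommGroup V] [Module F V] [FiniteDimensional F V]
    (hn : finrank F V = n)
    (G : Subgroup ((Submodule F V) ≃o (Submodule F V)))
    (hAF : ∀ H x H' x' : Submodule F V,
        finrank F H = n - 1 → finrank F x = 1 → ¬ x ≤ H →
        finrank F H' = n - 1 → finrank F x' = 1 → ¬ x' ≤ H' →
        ∃ g ∈ G, g H = H' ∧ g x = x')
    (hNot2 : ¬ (∀ x y x' y' : Submodule F V,
        finrank F x = 1 → finrank F y = 1 → finrank F x' = 1 → finrank F y' = 1 →
        x ≠ y → x' ≠ y' → ∃ g ∈ G, g x = x' ∧ g y = y')) :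
    ∀ x : Submodule F V, finrank F x = 1 →
      ∃ W : Submodule F V, x < W ∧ W < ⊤ ∧
        (∀ g ∈ G, g x = x → g W = W) ∧
        (∀ y z : Submodule F V, finrank F y = 1 → finrank F z = 1 →
          ¬ y ≤ W → ¬ z ≤ W → ∃ g ∈ G, g x = x ∧ g y = z) := by
  classical
  intro x hx
  -- finiteness
  have hFinV : Finite V := Module.finite_of_finite F
  have hFinL : Finite (Submodule F V) :=
    Finite.of_injective (fun s => (s : Set V)) SetLike.coe_injective
  have hFinΓ : Finite ((Submodule F V) ≃o (Submodule F V)) :=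
    Finite.of_injective (fun f => (f : Submodule F V → Submodule F V)) DFunLike.coe_injective
  letI : Fintype V := Fintype.ofFinite V
  have hq2 : 2 ≤ q := hq ▸ Fintype.one_lt_card
  -- n ≥ 2
  have hn2 : 2 ≤ n := by
    by_contra hcon
    push_neg at hcon
    apply hNot2
    intro a b a' b' ha hb ha' hb' hab ha'b'
    exfalso
    rcases Nat.lt_or_ge n 1 with h1 | h1
    · have := Submodule.finrank_le (R := F) a
      rw [hn] at this; omega
    · have h1' : n = 1 := by omega
      have hA : a = ⊤ := Submodule.eq_top_of_finrank_eq (by rw [ha, hn, h1'])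
      have hB : b = ⊤ := Submodule.eq_top_of_finrank_eq (by rw [hb, hn, h1'])
      exact hab (hA.trans hB.symm)
  -- characteristic
  obtain ⟨e, hp, hqe⟩ := FiniteField.card F (ringChar F)
  set p := ringChar F with hpdef
  haveI : Fact p.Prime := ⟨hp⟩
  have hqpe : q = p ^ (e : ℕ) := by rw [← hq, hqe]
  have he1 : 1 ≤ (e : ℕ) := e.2
  have hpq : p ∣ q := by rw [hqpe]; exact dvd_pow_self p (by omega)
  -- counting: points
  have hPtsnd : ¬ p ∣ Nat.card {y : Submodule F V // finrank F y = 1} :=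
    AFT.not_dvd_card_points F V hp (hq ▸ hpq) (by rw [hn]; omega)
  -- counting: hyperplanes = dual points
  have hfrAnn : ∀ Hh : Submodule F V, finrank F Hh = n - 1 →
      finrank F Hh.dualAnnihilator = 1 := by
    intro Hh h
    have h1 : finrank F (V ⧸ Hh) + finrank F Hh = n := by
      rw [← hn]; exact Submodule.finrank_quotient_add_finrank Hh
    have h2 : finrank F Hh.dualAnnihilator = finrank F (V ⧸ Hh) :=
      (Subspace.quotEquivAnnihilator Hh).finrank_eq.symm
    omega
  have hHypDual : Nat.card {y : Submodule F V // finrank F y = n - 1}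
      = Nat.card {y : Submodule F (Dual F V) // finrank F y = 1} := by
    apply Nat.card_congr
    refine Equiv.ofBijective (fun Hh => ⟨Hh.1.dualAnnihilator, hfrAnn _ Hh.2⟩) ⟨?_, ?_⟩
    · intro A B h
      exact Subtype.ext (Subspace.dualAnnihilator_inj.mp (congrArg Subtype.val h))
    · rintro ⟨Φ, hΦ⟩
      have hco : finrank F Φ.dualCoannihilator = n - 1 := by
        have := Subspace.finrank_add_finrank_dualCoannihilator_eq Φ
        rw [hΦ, hn] at this; omega
      refine ⟨⟨Φ.dualCoannihilator, hco⟩, ?_⟩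
      apply Subtype.ext
      have hle : Φ ≤ Φ.dualCoannihilator.dualAnnihilator := by
        intro φ hφ
        rw [Submodule.mem_dualAnnihilator]
        intro w hw
        rw [Submodule.mem_dualCoannihilator] at hw
        exact hw φ hφ
      have hfr : finrank F (Φ.dualCoannihilator.dualAnnihilator) = 1 := hfrAnn _ hco
      exact (Submodule.eq_of_le_of_finrank_eq hle (by rw [hΦ, hfr])).symm
  have hDualFin : Finite (Dual F V) :=
    Finite.of_injective (fun φ : Dual F V => (φ : V → F)) DFunLike.coe_injective
  have hHypnd : ¬ p ∣ Nat.card {y : Submodule F V // finrank F y = n - 1} := by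
    rw [hHypDual]
    exact AFT.not_dvd_card_points F (Dual F V) hp (hq ▸ hpq)
      (by rw [Subspace.dual_finrank_eq, hn]; omega)
  -- rank preservation
  have hrk1 : ∀ (g : (Submodule F V) ≃o (Submodule F V)) {y : Submodule F V},
      finrank F y = 1 → finrank F (g y) = 1 := by
    intro g y hy
    exact AFT.map_finrank_one g hy
  have hrkH : ∀ (g : (Submodule F V) ≃o (Submodule F V)) {y : Submodule F V},
      finrank F y = n - 1 → finrank F (g y) = n - 1 := by
    intro g y hy
    have h1 : 1 ≤ finrank F V := by rw [hn]; omega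
    have h2 := AFT.map_finrank_coatom g h1 (x := y) (by rw [hn]; exact hy)
    rw [hn] at h2; exact h2
  -- existence of a point off a hyperplane
  have hoff : ∀ Hh : Submodule F V, finrank F Hh = n - 1 →
      ∃ yy : Submodule F V, finrank F yy = 1 ∧ ¬ yy ≤ Hh := by
    intro Hh h
    have hne : Hh ≠ ⊤ := fun ht => by rw [ht, finrank_top, hn] at h; omega
    have hnall : ¬ ∀ v : V, v ∈ Hh := fun hall => hne (Submodule.eq_top_iff'.mpr hall)
    push_neg at hnall
    obtain ⟨v, hv⟩ := hnall
    have hv0 : v ≠ 0 := fun h0 => hv (h0 ▸ Hh.zero_mem)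
    exact ⟨Submodule.span F {v}, finrank_span_singleton hv0,
      fun hle => hv (hle (Submodule.mem_span_singleton_self v))⟩
  -- G transitive on points
  have hptrans : ∀ a b : Submodule F V, finrank F a = 1 → finrank F b = 1 →
      ∃ h ∈ G, h a = b := by
    intro a b ha hb
    obtain ⟨Ha, hHa⟩ := Submodule.exists_isCompl a
    obtain ⟨Hb, hHb⟩ := Submodule.exists_isCompl b
    have hra : finrank F Ha = n - 1 := by
      have := Submodule.finrank_add_eq_of_isCompl hHa; rw [ha, hn] at this; omega
    have hrb : finrank F Hb = n - 1 := by
      have := Submodule.finrank_add_eq_of_isCompl hHb; rw [hb, hn] at this; omega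
    have hna : ¬ a ≤ Ha := by
      intro hle
      have h0 := hHa.disjoint.eq_bot_of_le hle
      rw [h0, finrank_bot] at ha; omega
    have hnb : ¬ b ≤ Hb := by
      intro hle
      have h0 := hHb.disjoint.eq_bot_of_le hle
      rw [h0, finrank_bot] at hb; omega
    obtain ⟨g, hg, -, hg2⟩ := hAF Ha a Hb b hra ha hna hrb hb hnb
    exact ⟨g, hg, hg2⟩
  -- counting: points off a hyperplane
  have hcardoff : ∀ Kk : Submodule F V, finrank F Kk = n - 1 →
      Nat.card {y : Submodule F V // finrank F y = 1 ∧ ¬ y ≤ Kk} = q ^ (n - 1) := by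
    intro Kk hKk
    have h := AFT.card_points_not_le_mul F V Kk
    rw [hq] at h
    letI : Fintype Kk := Fintype.ofFinite _
    have hcH : Nat.card Kk = q ^ (n - 1) := by
      rw [Nat.card_eq_fintype_card, card_eq_pow_finrank (K := F), hq, hKk]
    have hcV : Nat.card V = q ^ n := by
      rw [Nat.card_eq_fintype_card, card_eq_pow_finrank (K := F), hq, hn]
    rw [hcH, hcV] at h
    have hsub : q ^ n - q ^ (n - 1) = q ^ (n - 1) * (q - 1) := by
      rw [Nat.mul_sub, mul_one, ← pow_succ]
      congr 2
      omega
    rw [hsub] at h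
    exact Nat.eq_of_mul_eq_mul_right (by omega) h
  -- actions on points and hyperplanes
  letI instP : MulAction ↥G {y : Submodule F V // finrank F y = 1} :=
    { smul := fun g y => ⟨(g : (Submodule F V) ≃o (Submodule F V)) y.1, hrk1 _ y.2⟩
      one_smul := fun y => Subtype.ext rfl
      mul_smul := fun g h y => Subtype.ext rfl }
  letI instH : MulAction ↥G {y : Submodule F V // finrank F y = n - 1} :=
    { smul := fun g y => ⟨(g : (Submodule F V) ≃o (Submodule F V)) y.1, hrkH _ y.2⟩
      one_smul := fun y => Subtype.ext rfl
      mul_smul := fun g h y => Subtype.ext rfl }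
  -- Sylow subgroup and its fixed point & fixed hyperplane
  obtain ⟨P⟩ := Sylow.nonempty (p := p) (G := ↥G)
  obtain ⟨x₀', hx₀'⟩ := P.isPGroup'.nonempty_fixed_point_of_prime_not_dvd_card
      {y : Submodule F V // finrank F y = 1} hPtsnd
  obtain ⟨H₀', hH₀'⟩ := P.isPGroup'.nonempty_fixed_point_of_prime_not_dvd_card
      {y : Submodule F V // finrank F y = n - 1} hHypnd
  have hfixx : ∀ g : ↥G, g ∈ (P : Subgroup ↥G) →
      (g : (Submodule F V) ≃o (Submodule F V)) x₀'.1 = x₀'.1 := by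
    intro g hg
    exact congrArg Subtype.val (hx₀' (⟨g, hg⟩ : ↥(P : Subgroup ↥G)))
  have hfixH : ∀ g : ↥G, g ∈ (P : Subgroup ↥G) →
      (g : (Submodule F V) ≃o (Submodule F V)) H₀'.1 = H₀'.1 := by
    intro g hg
    exact congrArg Subtype.val (hH₀' (⟨g, hg⟩ : ↥(P : Subgroup ↥G)))
  -- stabilizer of H₀
  set K' : Subgroup ↥G := MulAction.stabilizer ↥G H₀' with hK'def
  have hPleK' : (P : Subgroup ↥G) ≤ K' := by
    intro g hg
    exact Subtype.ext (hfixH g hg)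
  have hHtrans : ∀ A B : {y : Submodule F V // finrank F y = n - 1}, ∃ g : ↥G, g • A = B := by
    intro A B
    obtain ⟨ya, hya1, hya2⟩ := hoff A.1 A.2
    obtain ⟨yb, hyb1, hyb2⟩ := hoff B.1 B.2
    obtain ⟨g, hg, hg1, -⟩ := hAF A.1 ya B.1 yb A.2 hya1 hya2 B.2 hyb1 hyb2
    exact ⟨⟨g, hg⟩, Subtype.ext hg1⟩
  have hK'ind : ¬ p ∣ K'.index := by
    rw [hK'def, MulAction.index_stabilizer]
    have horb : MulAction.orbit ↥G H₀' = Set.univ :=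
      Set.eq_univ_of_forall fun B => MulAction.mem_orbit_iff.mpr (hHtrans H₀' B)
    rw [horb, Set.ncard_univ]
    exact hHypnd
  have hK'stab : ∀ s : ↥K',
      ((s : ↥G) : (Submodule F V) ≃o (Submodule F V)) H₀'.1 = H₀'.1 := by
    intro s
    have h2 : (s : ↥G) • H₀' = H₀' := s.2
    exact congrArg Subtype.val h2
  -- action of K' on points off H₀
  letI instα : MulAction ↥K' {y : Submodule F V // finrank F y = 1 ∧ ¬ y ≤ H₀'.1} :=
    { smul := fun s y => ⟨((s : ↥G) : (Submodule F V) ≃o (Submodule F V)) y.1,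
        hrk1 _ y.2.1, by
          intro hle
          apply y.2.2
          have h2 := hK'stab s
          have hle2 : ((s : ↥G) : (Submodule F V) ≃o (Submodule F V)) y.1
              ≤ ((s : ↥G) : (Submodule F V) ≃o (Submodule F V)) H₀'.1 := by
            rw [h2]; exact hle
          exact (OrderIso.le_iff_le _).mp hle2⟩
      one_smul := fun y => Subtype.ext rfl
      mul_smul := fun s t y => Subtype.ext rfl }
  have hαtrans : ∀ a b : {y : Submodule F V // finrank F y = 1 ∧ ¬ y ≤ H₀'.1},
      ∃ s : ↥K', s • a = b := by
    intro a b
    obtain ⟨g, hg, hg1, hg2⟩ := hAF H₀'.1 a.1 H₀'.1 b.1 H₀'.2 a.2.1 a.2.2 H₀'.2 b.2.1 b.2.2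
    refine ⟨⟨⟨g, hg⟩, ?_⟩, Subtype.ext hg2⟩
    show (⟨g, hg⟩ : ↥G) • H₀' = H₀'
    exact Subtype.ext hg1
  have hcardα : Nat.card {y : Submodule F V // finrank F y = 1 ∧ ¬ y ≤ H₀'.1}
      = p ^ ((e : ℕ) * (n - 1)) := by
    rw [hcardoff H₀'.1 H₀'.2, hqpe, ← pow_mul]
  -- Sylow transitivity on points off H₀
  have hsylow : ∀ a b : {y : Submodule F V // finrank F y = 1 ∧ ¬ y ≤ H₀'.1},
      ∃ s : ↥K', s ∈ (P : Subgroup ↥G).subgroupOf K' ∧ s • a = b := by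
    have hpg : IsPGroup p ((P : Subgroup ↥G).subgroupOf K') :=
      AFT.pgroup_of_injective (Subgroup.subgroupOfEquivOfLe hPleK').toMonoidHom
        (Subgroup.subgroupOfEquivOfLe hPleK').injective P.isPGroup'
    have hind : ¬ p ∣ ((P : Subgroup ↥G).subgroupOf K').index := by
      intro hdvd
      have h1 : (P : Subgroup ↥G).relIndex K' * K'.index = (P : Subgroup ↥G).index :=
        Subgroup.relIndex_mul_index hPleK'
      exact P.not_dvd_index (h1 ▸ hdvd.mul_right K'.index)
    intro a b
    exact AFT.sylow_trans hp hαtrans hcardα _ hpg hind a b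
  -- x₀ lies in H₀
  have hx₀H₀ : x₀'.1 ≤ H₀'.1 := by
    by_contra hnle
    set a₀ : {y : Submodule F V // finrank F y = 1 ∧ ¬ y ≤ H₀'.1} := ⟨x₀'.1, x₀'.2, hnle⟩
      with ha₀
    have hcard2 : 2 ≤ Nat.card {y : Submodule F V // finrank F y = 1 ∧ ¬ y ≤ H₀'.1} := by
      rw [hcardα]
      calc 2 ≤ p := hp.two_le
      _ = p ^ 1 := (pow_one p).symm
      _ ≤ p ^ ((e : ℕ) * (n - 1)) := Nat.pow_le_pow_right hp.pos
          (Nat.one_le_iff_ne_zero.mpr (Nat.mul_ne_zero (by omega) (by omega)))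
    have hnt : Nontrivial {y : Submodule F V // finrank F y = 1 ∧ ¬ y ≤ H₀'.1} :=
      Finite.one_lt_card_iff_nontrivial.mp (by omega)
    obtain ⟨b₀, hb₀⟩ := exists_ne a₀
    obtain ⟨s, hs, hsab⟩ := hsylow a₀ b₀
    apply hb₀
    have hfix := hfixx (s : ↥G) (Subgroup.mem_subgroupOf.mp hs)
    rw [← hsab]
    exact Subtype.ext hfix
  -- core: transitivity of the stabilizer of x₀ on points off g • H₀
  have hcoeinv : ∀ (u : ↥G) (y : Submodule F V),
      ((u⁻¹ : ↥G) : (Submodule F V) ≃o (Submodule F V))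
        ((u : (Submodule F V) ≃o (Submodule F V)) y) = y := by
    intro u y
    exact (u : (Submodule F V) ≃o (Submodule F V)).symm_apply_apply y
  have hcoeinv2 : ∀ (u : ↥G) (y : Submodule F V),
      ((u : ↥G) : (Submodule F V) ≃o (Submodule F V))
        (((u⁻¹ : ↥G) : (Submodule F V) ≃o (Submodule F V)) y) = y := by
    intro u y
    exact (u : (Submodule F V) ≃o (Submodule F V)).apply_symm_apply y
  have hcore : ∀ (g : ↥G), (g : (Submodule F V) ≃o (Submodule F V)) x₀'.1 = x₀'.1 →
      ∀ a b : Submodule F V, finrank F a = 1 → finrank F b = 1 →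
      ¬ a ≤ (g : (Submodule F V) ≃o (Submodule F V)) H₀'.1 →
      ¬ b ≤ (g : (Submodule F V) ≃o (Submodule F V)) H₀'.1 →
      ∃ t : ↥G, (t : (Submodule F V) ≃o (Submodule F V)) x₀'.1 = x₀'.1 ∧
        (t : (Submodule F V) ≃o (Submodule F V)) a = b := by
    intro g hgx a b ha hb hna hnb
    set a' := ((g⁻¹ : ↥G) : (Submodule F V) ≃o (Submodule F V)) a with ha'def
    set b' := ((g⁻¹ : ↥G) : (Submodule F V) ≃o (Submodule F V)) b with hb'def
    have ha' : finrank F a' = 1 := hrk1 _ ha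
    have hb' : finrank F b' = 1 := hrk1 _ hb
    have hna' : ¬ a' ≤ H₀'.1 := by
      intro hle
      apply hna
      have h2 := (OrderIso.le_iff_le ((g : ↥G) : (Submodule F V) ≃o (Submodule F V))).mpr hle
      rwa [ha'def, hcoeinv2 g a] at h2
    have hnb' : ¬ b' ≤ H₀'.1 := by
      intro hle
      apply hnb
      have h2 := (OrderIso.le_iff_le ((g : ↥G) : (Submodule F V) ≃o (Submodule F V))).mpr hle
      rwa [hb'def, hcoeinv2 g b] at h2
    obtain ⟨s, hs, hsab⟩ := hsylow ⟨a', ha', hna'⟩ ⟨b', hb', hnb'⟩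
    have hsx := hfixx (s : ↥G) (Subgroup.mem_subgroupOf.mp hs)
    have hsab' : (((s : ↥G)) : (Submodule F V) ≃o (Submodule F V)) a' = b' :=
      congrArg Subtype.val hsab
    have hginvx : ((g⁻¹ : ↥G) : (Submodule F V) ≃o (Submodule F V)) x₀'.1 = x₀'.1 :=
      (congrArg (fun z => ((g⁻¹ : ↥G) : (Submodule F V) ≃o (Submodule F V)) z) hgx.symm).trans
        (hcoeinv g x₀'.1)
    refine ⟨g * (s : ↥G) * g⁻¹, ?_, ?_⟩
    · show (g : (Submodule F V) ≃o (Submodule F V))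
        (((s : ↥G) : (Submodule F V) ≃o (Submodule F V))
          (((g⁻¹ : ↥G) : (Submodule F V) ≃o (Submodule F V)) x₀'.1)) = x₀'.1
      rw [hginvx, hsx, hgx]
    · show (g : (Submodule F V) ≃o (Submodule F V))
        (((s : ↥G) : (Submodule F V) ≃o (Submodule F V))
          (((g⁻¹ : ↥G) : (Submodule F V) ≃o (Submodule F V)) a)) = b
      rw [← ha'def, hsab', hb'def, hcoeinv2 g b]
  -- the subspace W₀
  set S₀ : Set (Submodule F V) :=
    {Kk | ∃ g : ↥G, (g : (Submodule F V) ≃o (Submodule F V)) x₀'.1 = x₀'.1 ∧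
      (g : (Submodule F V) ≃o (Submodule F V)) H₀'.1 = Kk} with hS₀def
  set W₀ : Submodule F V := sInf S₀ with hW₀def
  have hH₀S₀ : H₀'.1 ∈ S₀ := ⟨1, rfl, rfl⟩
  have hx₀leW₀ : x₀'.1 ≤ W₀ := by
    rw [hW₀def]
    apply le_sInf
    rintro Kk ⟨g, hg1, rfl⟩
    rw [← hg1]
    exact (OrderIso.le_iff_le _).mpr hx₀H₀
  have hW₀leH₀ : W₀ ≤ H₀'.1 := sInf_le hH₀S₀
  have hH₀top : H₀'.1 ≠ ⊤ := by
    intro ht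
    have h2 := H₀'.2
    rw [ht, finrank_top, hn] at h2; omega
  have hW₀top : W₀ < ⊤ := lt_of_le_of_lt hW₀leH₀ (lt_of_le_of_ne le_top hH₀top)
  -- invariance of W₀
  have hW₀inv : ∀ g : ↥G, (g : (Submodule F V) ≃o (Submodule F V)) x₀'.1 = x₀'.1 →
      (g : (Submodule F V) ≃o (Submodule F V)) W₀ = W₀ := by
    intro g hg
    have himg : (fun z => (g : (Submodule F V) ≃o (Submodule F V)) z) '' S₀ = S₀ := by
      ext Kk
      constructor
      · rintro ⟨Kk', ⟨u, hu1, rfl⟩, rfl⟩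
        refine ⟨g * u, ?_, rfl⟩
        show (g : (Submodule F V) ≃o (Submodule F V))
          ((u : (Submodule F V) ≃o (Submodule F V)) x₀'.1) = x₀'.1
        rw [hu1, hg]
      · rintro ⟨u, hu1, rfl⟩
        refine ⟨((g⁻¹ * u : ↥G) : (Submodule F V) ≃o (Submodule F V)) H₀'.1,
          ⟨g⁻¹ * u, ?_, rfl⟩, ?_⟩
        · show ((g⁻¹ : ↥G) : (Submodule F V) ≃o (Submodule F V))
            ((u : (Submodule F V) ≃o (Submodule F V)) x₀'.1) = x₀'.1
          rw [hu1]
          exact (congrArg (fun z => ((g⁻¹ : ↥G) : (Submodule F V) ≃o (Submodule F V)) z)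
            hg.symm).trans (hcoeinv g x₀'.1)
        · show (g : (Submodule F V) ≃o (Submodule F V))
            (((g⁻¹ : ↥G) : (Submodule F V) ≃o (Submodule F V))
              ((u : (Submodule F V) ≃o (Submodule F V)) H₀'.1)) = _
          rw [hcoeinv2 g]
    rw [hW₀def]
    calc (g : (Submodule F V) ≃o (Submodule F V)) (sInf S₀)
        = ⨅ a ∈ S₀, (g : (Submodule F V) ≃o (Submodule F V)) a :=
          OrderIso.map_sInf _ S₀
      _ = sInf ((fun z => (g : (Submodule F V) ≃o (Submodule F V)) z) '' S₀) :=
          (sInf_image).symm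
      _ = sInf S₀ := by rw [himg]
  -- transitivity off W₀
  have hW₀trans : ∀ a b : Submodule F V, finrank F a = 1 → finrank F b = 1 →
      ¬ a ≤ W₀ → ¬ b ≤ W₀ →
      ∃ t : ↥G, (t : (Submodule F V) ≃o (Submodule F V)) x₀'.1 = x₀'.1 ∧
        (t : (Submodule F V) ≃o (Submodule F V)) a = b := by
    intro a b ha hb hna hnb
    have h1 : ∃ Kk ∈ S₀, ¬ a ≤ Kk := by
      by_contra hcon
      push_neg at hcon
      exact hna (hW₀def ▸ le_sInf hcon)
    have h2 : ∃ Kk ∈ S₀, ¬ b ≤ Kk := by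
      by_contra hcon
      push_neg at hcon
      exact hnb (hW₀def ▸ le_sInf hcon)
    obtain ⟨K₁, hK₁S, hK₁a⟩ := h1
    obtain ⟨K₂, hK₂S, hK₂b⟩ := h2
    obtain ⟨g₁, hg₁x, hg₁H⟩ := hK₁S
    obtain ⟨g₂, hg₂x, hg₂H⟩ := hK₂S
    have hrkK₁ : finrank F K₁ = n - 1 := by rw [← hg₁H]; exact hrkH _ H₀'.2
    have hrkK₂ : finrank F K₂ = n - 1 := by rw [← hg₂H]; exact hrkH _ H₀'.2
    -- a third point off both hyperplanes
    have hw : ∃ w : Submodule F V, finrank F w = 1 ∧ ¬ w ≤ K₁ ∧ ¬ w ≤ K₂ := by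
      by_contra hcon
      push_neg at hcon
      letI : Fintype {y : Submodule F V // finrank F y = 1} := Fintype.ofFinite _
      set A : Finset {y : Submodule F V // finrank F y = 1} :=
        Finset.univ.filter (fun u => ¬ u.1 ≤ K₁) with hA
      set B : Finset {y : Submodule F V // finrank F y = 1} :=
        Finset.univ.filter (fun u => ¬ u.1 ≤ K₂) with hB
      have hdisj : Disjoint A B := by
        rw [Finset.disjoint_left]
        intro u huA huB
        rw [hA, Finset.mem_filter] at huA
        rw [hB, Finset.mem_filter] at huB
        exact huB.2 (hcon u.1 u.2 huA.2)
      have hcardsub : ∀ Kk : Submodule F V, finrank F Kk = n - 1 →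
          (Finset.univ.filter (fun u : {y : Submodule F V // finrank F y = 1} =>
            ¬ u.1 ≤ Kk)).card = q ^ (n - 1) := by
        intro Kk hKk
        rw [← hcardoff Kk hKk]
        rw [Nat.card_congr (Equiv.subtypeSubtypeEquivSubtypeInter
          (fun y : Submodule F V => finrank F y = 1) (fun y => ¬ y ≤ Kk)).symm]
        rw [Nat.card_eq_fintype_card, Fintype.card_subtype]
      have hAcard : A.card = q ^ (n - 1) := by rw [hA]; exact hcardsub K₁ hrkK₁
      have hBcard : B.card = q ^ (n - 1) := by rw [hB]; exact hcardsub K₂ hrkK₂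
      have hsum : A.card + B.card ≤ Fintype.card {y : Submodule F V // finrank F y = 1} := by
        rw [← Finset.card_union_of_disjoint hdisj]
        exact Finset.card_le_univ _
      have hTot : Fintype.card {y : Submodule F V // finrank F y = 1} * (q - 1)
          = q ^ n - 1 := by
        have h3 := AFT.card_points_mul F V
        rw [hq] at h3
        have hcV : Nat.card V = q ^ n := by
          rw [Nat.card_eq_fintype_card, card_eq_pow_finrank (K := F), hq, hn]
        rw [hcV] at h3
        rw [← Nat.card_eq_fintype_card]
        exact h3
      have hmul := Nat.mul_le_mul_right (q - 1) hsum
      rw [Nat.add_mul, hAcard, hBcard, hTot] at hmul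
      have hsub1 : q ^ (n - 1) * (q - 1) = q ^ n - q ^ (n - 1) := by
        rw [Nat.mul_sub, mul_one, ← pow_succ]
        congr 2
        omega
      have hqn : q ^ n = q ^ (n - 1) * q := by
        rw [← pow_succ]; congr 1; omega
      have h2q : 2 * q ^ (n - 1) ≤ q ^ n := by
        rw [hqn, mul_comm]
        exact Nat.mul_le_mul_left _ hq2
      have hpow1 : 1 ≤ q ^ (n - 1) := Nat.one_le_pow _ _ (by omega)
      rw [hsub1] at hmul
      omega
    obtain ⟨w, hw1, hwK₁, hwK₂⟩ := hw
    obtain ⟨t₁, ht₁x, ht₁⟩ := hcore g₁ hg₁x a w ha hw1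
      (by rw [hg₁H]; exact hK₁a) (by rw [hg₁H]; exact hwK₁)
    obtain ⟨t₂, ht₂x, ht₂⟩ := hcore g₂ hg₂x w b hw1 hb
      (by rw [hg₂H]; exact hwK₂) (by rw [hg₂H]; exact hK₂b)
    refine ⟨t₂ * t₁, ?_, ?_⟩
    · show (t₂ : (Submodule F V) ≃o (Submodule F V))
        ((t₁ : (Submodule F V) ≃o (Submodule F V)) x₀'.1) = x₀'.1
      rw [ht₁x, ht₂x]
    · show (t₂ : (Submodule F V) ≃o (Submodule F V))
        ((t₁ : (Submodule F V) ≃o (Submodule F V)) a) = b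
      rw [ht₁, ht₂]
  -- strictness: x₀ ≠ W₀ (else G would be 2-transitive)
  have hx₀W₀ : x₀'.1 ≠ W₀ := by
    intro hEq
    apply hNot2
    intro a b a' b' ha hb ha' hb' hab hab'
    obtain ⟨h1, hh1, hh1a⟩ := hptrans a x₀'.1 ha x₀'.2
    obtain ⟨h2, hh2, hh2a⟩ := hptrans a' x₀'.1 ha' x₀'.2
    have hbne : ¬ (h1 b ≤ W₀) := by
      rw [← hEq, AFT.rank1_le_iff (hrk1 _ hb) x₀'.2]
      intro heq2
      apply hab
      exact ((EquivLike.injective h1) (heq2.trans hh1a.symm)).symm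
    have hbne' : ¬ (h2 b' ≤ W₀) := by
      rw [← hEq, AFT.rank1_le_iff (hrk1 _ hb') x₀'.2]
      intro heq2
      apply hab'
      exact ((EquivLike.injective h2) (heq2.trans hh2a.symm)).symm
    obtain ⟨t, htx, htb⟩ := hW₀trans (h1 b) (h2 b') (hrk1 _ hb) (hrk1 _ hb') hbne hbne'
    refine ⟨h2⁻¹ * (t : (Submodule F V) ≃o (Submodule F V)) * h1,
      G.mul_mem (G.mul_mem (G.inv_mem hh2) t.2) hh1, ?_, ?_⟩
    · show h2.symm ((t : (Submodule F V) ≃o (Submodule F V)) (h1 a)) = a'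
      rw [hh1a, htx, ← hh2a]
      exact h2.symm_apply_apply a'
    · show h2.symm ((t : (Submodule F V) ≃o (Submodule F V)) (h1 b)) = b'
      rw [htb]
      exact h2.symm_apply_apply b'
  have hx₀ltW₀ : x₀'.1 < W₀ := lt_of_le_of_ne hx₀leW₀ hx₀W₀
  -- transfer to the given point x
  obtain ⟨c, hc, hcx⟩ := hptrans x₀'.1 x x₀'.2 hx
  have hcinvx : c.symm x = x₀'.1 := by
    rw [← hcx]
    exact c.symm_apply_apply x₀'.1
  refine ⟨c W₀, ?_, ?_, ?_, ?_⟩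
  · rw [← hcx]
    exact (OrderIso.lt_iff_lt c).mpr hx₀ltW₀
  · have h2 := (OrderIso.lt_iff_lt c).mpr hW₀top
    rwa [OrderIso.map_top] at h2
  · intro g hg hgx
    have hfix : ((( ⟨c, hc⟩ : ↥G)⁻¹ * (⟨g, hg⟩ : ↥G) * (⟨c, hc⟩ : ↥G) : ↥G) :
        (Submodule F V) ≃o (Submodule F V)) x₀'.1 = x₀'.1 := by
      show c.symm (g (c x₀'.1)) = x₀'.1
      rw [hcx, hgx, hcinvx]
    have h2 := hW₀inv _ hfix
    have h3 : c.symm (g (c W₀)) = W₀ := h2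
    have h4 := congrArg (fun z => c z) h3
    simpa using h4
  · intro y z hy hz hyW hzW
    have hy' : ¬ (c.symm y ≤ W₀) := by
      intro hle
      apply hyW
      have h2 := (OrderIso.le_iff_le c).mpr hle
      rwa [OrderIso.apply_symm_apply] at h2
    have hz' : ¬ (c.symm z ≤ W₀) := by
      intro hle
      apply hzW
      have h2 := (OrderIso.le_iff_le c).mpr hle
      rwa [OrderIso.apply_symm_apply] at h2
    obtain ⟨t, htx, ht⟩ := hW₀trans (c.symm y) (c.symm z)
      (hrk1 c.symm hy) (hrk1 c.symm hz) hy' hz'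
    refine ⟨c * (t : (Submodule F V) ≃o (Submodule F V)) * c⁻¹,
      G.mul_mem (G.mul_mem hc t.2) (G.inv_mem hc), ?_, ?_⟩
    · show c ((t : (Submodule F V) ≃o (Submodule F V)) (c.symm x)) = x
      rw [hcinvx, htx, hcx]
    · show c ((t : (Submodule F V) ≃o (Submodule F V)) (c.symm y)) = z
      rw [ht]
      exact c.apply_symm_apply z
end

section
/- Let V carry a nondegenerate classical geometry of rank r over GF(q), and let T ⊂ W be totally isotropic or totally singular subspaces with dim T = i−1 and dim W = i. Then the number of isotropic/singular points in T^⊥ but not in W^⊥ equals q^{2r−i+c}, where c depends only on the type of V: c = 0 for Sp(2r,q) and O(2r+1,q), c = −1 for O⁺(2r,q), c = 1 for O⁻(2r+2,q), c = −1/2 for U(2r,q^{1/2}), and c = 1/2 for U(2r+1,q^{1/2}). -/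
open Module

/-- The six types of classical geometries (symplectic, orthogonal of plus/odd/minus type,
unitary of even/odd dimension). -/
inductive ClassicalKind
  | sp | oPlus | oOdd | oMinus | uEven | uOdd

/-- The dimension of the underlying vector space of a classical geometry of rank `r`:
`Sp(2r,q)`, `O⁺(2r,q)`, `O(2r+1,q)`, `O⁻(2r+2,q)`, `U(2r,q^{1/2})`, `U(2r+1,q^{1/2})`. -/
def ClassicalKind.dimension : ClassicalKind → ℕ → ℕ
  | .sp, r => 2 * r
  | .oPlus, r => 2 * r
  | .oOdd, r => 2 * r + 1
  | .oMinus, r => 2 * r + 2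
  | .uEven, r => 2 * r
  | .uOdd, r => 2 * r + 1

/-- The value `2c + 2` for the constant `c` of Lemma 9.2: `c = 0, -1, 0, 1, -1/2, 1/2`
for `Sp(2r,q)`, `O⁺(2r,q)`, `O(2r+1,q)`, `O⁻(2r+2,q)`, `U(2r,q^{1/2})`, `U(2r+1,q^{1/2})`.
(Stated as `2c+2 ∈ ℕ` so the counting identity can be phrased after squaring.) -/
def ClassicalKind.dCoeff : ClassicalKind → ℕ
  | .sp => 2
  | .oPlus => 0
  | .oOdd => 2
  | .oMinus => 4
  | .uEven => 1
  | .uOdd => 3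

def ClassicalKind.IsOrthogonal : ClassicalKind → Prop
  | .oPlus => True
  | .oOdd => True
  | .oMinus => True
  | _ => False

def ClassicalKind.IsUnitary : ClassicalKind → Prop
  | .uEven => True
  | .uOdd => True
  | _ => False

/-- A vector is singular: `Q v = 0` in the orthogonal case, `B v v = 0` otherwise. -/
def SingVec {F V : Type*} [Zero F] (k : ClassicalKind) (B : V → V → F) (Q : V → F) (v : V) :
    Prop :=
  match k with
  | .oPlus => Q v = 0
  | .oOdd => Q v = 0
  | .oMinus => Q v = 0
  | _ => B v v = 0


section counts
variable {F : Type*} [Field F] [Fintype F] {V : Type*} [AddCommGroup V] [Module F V]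
  [FiniteDimensional F V]

lemma card_module_eq' (M : Type*) [AddCommGroup M] [Module F M]
    [FiniteDimensional F M] : Nat.card M = Fintype.card F ^ finrank F M := by
  have : Finite M := Module.finite_of_finite F
  cases nonempty_fintype M
  rw [Nat.card_eq_fintype_card, card_eq_pow_finrank (K := F)]

/-- counting singular points on a coset, orthogonal case -/
lemma orth_count (B : V → V → F) (Q : V → F)
    (haddr : ∀ u v w : V, B u (v + w) = B u v + B u w)
    (hsmulr : ∀ (a : F) (u v : V), B u (a • v) = a * B u v)
    (hsymm : ∀ u v : V, B u v = B v u)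
    (hQs : ∀ (a : F) (v : V), Q (a • v) = a ^ 2 * Q v)
    (hQa : ∀ u v : V, Q (u + v) = Q u + Q v + B u v)
    (A : Submodule F V) (z w : V) (hwA : w ∈ A) (hQw : Q w = 0)
    (hBzw : B z w = 1) (hAperp : ∀ x ∈ A, B w x = 0) :
    Nat.card {x : A // Q (z + x) = 0} * Fintype.card F = Nat.card A := by
  classical
  set Bz : V →ₗ[F] F := ⟨⟨B z, haddr z⟩, fun a v => hsmulr a z v⟩ with hBz
  set ψ : A →ₗ[F] F := Bz.comp A.subtype with hψ
  have hψ_apply : ∀ x : A, ψ x = B z x.1 := fun x => rfl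
  set w' : A := ⟨w, hwA⟩ with hw'
  have hψw : ψ w' = 1 := by rw [hψ_apply]; exact hBzw
  have hψ_surj : Function.Surjective ψ := by
    intro c
    refine ⟨c • w', ?_⟩
    rw [map_smul, hψw, smul_eq_mul, mul_one]
  have hBxw : ∀ x ∈ A, B x w = 0 := fun x hx => by rw [hsymm]; exact hAperp x hx
  -- computation lemmas
  have hQsub : ∀ (x : V) (c : F), B x w = 0 → Q (x - c • w) = Q x := by
    intro x c hx
    rw [sub_eq_add_neg, ← neg_smul, hQa, hQs, hQw, hsmulr, hx]
    ring
  have hBzsub : ∀ (x : V) (c : F), B z (x - c • w) = B z x - c := by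
    intro x c
    rw [sub_eq_add_neg, ← neg_smul, haddr, hsmulr, hBzw]
    ring
  have hQz : ∀ x : V, Q (z + x) = Q z + Q x + B z x := fun x => hQa z x
  -- the bijection
  set e : {x : A // Q (z + x.1) = 0} → LinearMap.ker ψ := fun x =>
    ⟨x.1 - (B z x.1.1) • w', by
      rw [LinearMap.mem_ker, map_sub, map_smul, hψw, smul_eq_mul, mul_one, hψ_apply, sub_self]⟩
    with he
  set g : LinearMap.ker ψ → {x : A // Q (z + x.1) = 0} := fun u =>
    ⟨u.1 - (Q z + Q u.1.1) • w', by
      have hzu : B z u.1.1 = 0 := u.2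
      have h1 : ((u.1 - (Q z + Q u.1.1) • w' : A) : V) = u.1.1 - (Q z + Q u.1.1) • w := rfl
      rw [h1, hQz, hQsub _ _ (hBxw _ u.1.2), hBzsub, hzu]
      ring⟩ with hg
  have hge : ∀ x, g (e x) = x := by
    rintro ⟨x, hx⟩
    have hBzx : B z x.1 = -(Q z + Q x.1) := by
      have := hx
      rw [hQz] at this
      linear_combination this
    apply Subtype.ext; apply Subtype.ext
    show ((e ⟨x, hx⟩ : A) : V) - (Q z + Q ((e ⟨x, hx⟩ : A) : V)) • w = x.1
    have h1 : ((e ⟨x, hx⟩ : A) : V) = x.1 - (B z x.1) • w := rfl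
    rw [h1, hQsub _ _ (hBxw _ x.2), hBzx]
    rw [neg_smul, sub_neg_eq_add, add_sub_cancel_right]
  have heg : ∀ u, e (g u) = u := by
    rintro ⟨u, hu⟩
    have hzu : B z u.1 = 0 := hu
    apply Subtype.ext; apply Subtype.ext
    show ((g ⟨u, hu⟩ : _) : V) - (B z ((g ⟨u, hu⟩ : _) : V)) • w = u.1
    have h1 : ((g ⟨u, hu⟩ : _) : V) = u.1 - (Q z + Q u.1) • w := rfl
    rw [h1, hBzsub, hzu]
    rw [zero_sub, neg_smul, sub_neg_eq_add, sub_add_cancel]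
  have hcard1 : Nat.card {x : A // Q (z + x.1) = 0} = Nat.card (LinearMap.ker ψ) :=
    Nat.card_congr ⟨e, g, hge, heg⟩
  -- now the rank computation
  have hrk : finrank F (LinearMap.range ψ) + finrank F (LinearMap.ker ψ) = finrank F A :=
    LinearMap.finrank_range_add_finrank_ker ψ
  have hrange : LinearMap.range ψ = ⊤ := LinearMap.range_eq_top.mpr hψ_surj
  rw [hrange, finrank_top, finrank_self] at hrk
  rw [hcard1, card_module_eq' (F := F) (LinearMap.ker ψ), card_module_eq' (F := F) A, ← pow_succ]
  congr 1
  omega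



lemma trace_lemma {F : Type*} [Field F] [Fintype F] (σ : F ≃+* F)
    (hσ : ∀ a, σ (σ a) = a) (hne : σ ≠ RingEquiv.refl F) :
    (Nat.card {x : F // x + σ x = 0}) ^ 2 = Fintype.card F ∧
      ∀ c : F, σ c = c → ∃ lam : F, lam + σ lam = c := by
  -- a generator of the unit group
  obtain ⟨g, hg⟩ := IsCyclic.exists_generator (α := Fˣ)
  have hgen : ∀ x : F, x ≠ 0 → ∃ n : ℕ, x = (g : F) ^ n := by
    intro x hx
    obtain ⟨n, hn⟩ := mem_powers_iff_mem_zpowers.mpr (hg (Units.mk0 x hx))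
    refine ⟨n, ?_⟩
    have : ((g ^ n : Fˣ) : F) = ((Units.mk0 x hx : Fˣ) : F) := by exact congrArg Units.val hn
    simpa using this.symm
  -- the fixed set
  have hfix_exists : ∃ x : F, σ x ≠ x := by
    by_contra h
    push_neg at h
    exact hne (RingEquiv.ext h)
  -- g is not fixed
  have hgnf : σ (g : F) ≠ (g : F) := by
    intro hfix
    obtain ⟨x, hx⟩ := hfix_exists
    apply hx
    rcases eq_or_ne x 0 with rfl | hx0
    · simp
    · obtain ⟨n, rfl⟩ := hgen x hx0
      rw [map_pow, hfix]
  -- every element is a + b * g with a b fixed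
  have hsg : σ ((g:F) + σ g) = (g:F) + σ g := by rw [map_add, hσ]; ring
  have hpg : σ ((g:F) * σ g) = (g:F) * σ g := by rw [map_mul, hσ]; ring
  have hg2 : (g:F) ^ 2 = ((g:F) + σ g) * g - (g:F) * σ g := by ring
  have hspan : ∀ x : F, ∃ a b : F, σ a = a ∧ σ b = b ∧ x = a + b * g := by
    have key : ∀ n : ℕ, ∃ a b : F, σ a = a ∧ σ b = b ∧ (g:F) ^ n = a + b * g := by
      intro n
      induction n with
      | zero => exact ⟨1, 0, by simp, by simp, by simp⟩
      | succ n ih =>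
        obtain ⟨a, b, ha, hb, hab⟩ := ih
        refine ⟨-(b * ((g:F) * σ g)), a + b * ((g:F) + σ g), ?_, ?_, ?_⟩
        · rw [map_neg, map_mul, hb, hpg]
        · rw [map_add, map_mul, ha, hb, hsg]
        · rw [pow_succ, hab]; ring
    intro x
    rcases eq_or_ne x 0 with rfl | hx0
    · exact ⟨0, 0, by simp, by simp, by simp⟩
    · obtain ⟨n, rfl⟩ := hgen x hx0
      exact key n
  -- the representation is unique, giving |F| = |K|^2 where K is the fixed subfield
  set S := {x : F // σ x = x}
  have hbij : Function.Bijective (fun p : S × S => (p.1 : F) + (p.2 : F) * g) := by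
    constructor
    · rintro ⟨⟨a, ha⟩, ⟨b, hb⟩⟩ ⟨⟨a', ha'⟩, ⟨b', hb'⟩⟩ h
      simp only at h
      have hbb : b = b' := by
        by_contra hne'
        apply hgnf
        have hbb' : b - b' ≠ 0 := fun hc => hne' (by linear_combination hc)
        have hgval : (g : F) = (a' - a) / (b - b') := by
          rw [eq_div_iff hbb']
          linear_combination h
        rw [hgval, map_div₀, map_sub, map_sub, ha, ha', hb, hb']
      have haa : a = a' := by
        have h2 := h
        rw [hbb] at h2
        exact add_right_cancel h2
      subst haa; subst hbb; rfl
    · intro x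
      obtain ⟨a, b, ha, hb, hx⟩ := hspan x
      exact ⟨⟨⟨a, ha⟩, ⟨b, hb⟩⟩, hx.symm⟩
  have hcardF : Nat.card F = Nat.card S ^ 2 := by
    rw [← Nat.card_congr (Equiv.ofBijective _ hbij), Nat.card_prod, sq]
  -- the trace map
  set Tr : F →+ F := AddMonoidHom.mk' (fun lam => lam + σ lam) (by
    intro a b
    show (a + b) + σ (a + b) = (a + σ a) + (b + σ b)
    rw [map_add]; ring) with hTr
  have hTrapp : ∀ lam, Tr lam = lam + σ lam := fun _ => rfl
  -- trace is not identically zero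
  have hTrne : ∃ lam, Tr lam ≠ 0 := by
    by_contra h
    push_neg at h
    have hneg : ∀ lam : F, σ lam = -lam := by
      intro lam
      have h2 := h lam
      rw [hTrapp] at h2
      linear_combination h2
    have h1 : (1 : F) = -1 := by rw [← hneg 1, map_one]
    have h2 : (2 : F) = 0 := by linear_combination h1
    apply hne
    apply RingEquiv.ext
    intro x
    have := hneg x
    rw [this]
    have : -x = x := by linear_combination -(x * h2)
    simp [this]
  -- trace image is exactly the fixed set
  have hTr_fix : ∀ lam, σ (Tr lam) = Tr lam := by
    intro lam; rw [hTrapp, map_add, hσ]; ring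
  have hTr_surj : ∀ c : F, σ c = c → ∃ lam : F, lam + σ lam = c := by
    intro c hc
    obtain ⟨lam0, hlam0⟩ := hTrne
    refine ⟨c / Tr lam0 * lam0, ?_⟩
    have hfix : σ (c / Tr lam0) = c / Tr lam0 := by
      rw [map_div₀, hc, hTr_fix]
    rw [map_mul, hfix]
    have : c / Tr lam0 * lam0 + c / Tr lam0 * σ lam0 = c / Tr lam0 * Tr lam0 := by
      rw [hTrapp]; ring
    rw [this, div_mul_cancel₀ _ hlam0]
  refine ⟨?_, hTr_surj⟩
  -- cardinality of the kernel
  have hrange : (Tr.range : Set F) = {x : F | σ x = x} := by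
    ext c
    constructor
    · rintro ⟨lam, rfl⟩
      exact hTr_fix lam
    · intro hc
      obtain ⟨lam, hlam⟩ := hTr_surj c hc
      exact ⟨lam, hlam⟩
  have hcard_decomp : Nat.card F = Nat.card (F ⧸ Tr.ker) * Nat.card Tr.ker :=
    AddSubgroup.card_eq_card_quotient_mul_card_addSubgroup _
  have hquot : Nat.card (F ⧸ Tr.ker) = Nat.card Tr.range :=
    Nat.card_congr (QuotientAddGroup.quotientKerEquivRange Tr).toEquiv
  have hrange_card : Nat.card Tr.range = Nat.card S := by
    apply Nat.card_congr
    exact Equiv.setCongr hrange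
  have hker_card : Nat.card {x : F // x + σ x = 0} = Nat.card Tr.ker := by
    apply Nat.card_congr
    apply Equiv.subtypeEquivRight
    intro x
    rw [AddMonoidHom.mem_ker, hTrapp]
  have : Nonempty S := ⟨⟨0, map_zero σ⟩⟩
  have hS_pos : 0 < Nat.card S := Nat.card_pos
  have hker_pos : 0 < Nat.card Tr.ker := Nat.card_pos
  have hFq : Nat.card F = Fintype.card F := Nat.card_eq_fintype_card
  -- Nat.card F = Nat.card S * Nat.card ker and Nat.card F = Nat.card S ^ 2
  have key : Nat.card S * Nat.card Tr.ker = Nat.card S ^ 2 := by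
    rw [← hcardF, hcard_decomp, hquot, hrange_card]
  have hkerS : Nat.card Tr.ker = Nat.card S := by
    have := key
    rw [sq] at this
    exact Nat.eq_of_mul_eq_mul_left hS_pos this
  rw [hker_card, hkerS, ← hcardF, hFq]

section helpers
variable {F : Type*} [Field F] {V : Type*} [AddCommGroup V] [Module F V]

/-- fibers of a linear map are in bijection with the kernel -/
def fiberEquivKer {N : Type*} [AddCommGroup N] [Module F N] (f : V →ₗ[F] N)
    {y : N} (x₀ : V) (hx₀ : f x₀ = y) :
    {x : V // f x = y} ≃ LinearMap.ker f where
  toFun x := ⟨x.1 - x₀, by simp [LinearMap.mem_ker, x.2, hx₀]⟩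
  invFun u := ⟨x₀ + u.1, by have := u.2; simp only [LinearMap.mem_ker] at this; simp [this, hx₀]⟩
  left_inv x := by ext; simp
  right_inv u := by ext; simp

/-- surjectivity of the evaluation map attached to a semilinear-independent family -/
lemma pi_surjective [FiniteDimensional F V]
    (σ : F ≃+* F) (hσ : ∀ a, σ (σ a) = a)
    (B : V → V → F)
    (haddl : ∀ u v w : V, B (u + v) w = B u w + B v w)
    (haddr : ∀ u v w : V, B u (v + w) = B u v + B u w)
    (hsmull : ∀ (a : F) (u v : V), B (a • u) v = σ a * B u v)
    (hsmulr : ∀ (a : F) (u v : V), B u (a • v) = a * B u v)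
    (hnd : ∀ u : V, (∀ v : V, B u v = 0) → u = 0)
    {m : ℕ} (u : Fin m → V) (hu : LinearIndependent F u) :
    Function.Surjective (LinearMap.pi (fun j => ⟨⟨B (u j), haddr (u j)⟩,
      fun a v => hsmulr a (u j) v⟩ : Fin m → V →ₗ[F] F)) := by
  set Λ : V →ₗ[F] (Fin m → F) :=
    LinearMap.pi (fun j => ⟨⟨B (u j), haddr (u j)⟩, fun a v => hsmulr a (u j) v⟩) with hΛ
  rw [← LinearMap.range_eq_top]
  by_contra hne
  obtain ⟨f, hf0, hfbot⟩ := Submodule.exists_dual_map_eq_bot_of_lt_top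
    (lt_top_iff_ne_top.mpr hne) inferInstance
  have hB0 : ∀ v : V, B 0 v = 0 := by
    intro v
    have h := haddl 0 0 v
    rw [add_zero] at h
    linear_combination -h

  have hvan : ∀ v : V, f (Λ v) = 0 := by
    intro v
    have hmem : f (Λ v) ∈ Submodule.map f (LinearMap.range Λ) :=
      Submodule.mem_map_of_mem (LinearMap.mem_range_self _ v)
    rw [hfbot] at hmem
    simpa using hmem
  set a : Fin m → F := fun j => f (fun i => if j = i then 1 else 0) with ha
  have hfx : ∀ x : Fin m → F, f x = ∑ j, x j * a j := by
    intro x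
    rw [LinearMap.pi_apply_eq_sum_univ f x]
    simp [ha, smul_eq_mul]
  have hsum : ∀ (s : Finset (Fin m)) (v : V),
      B (∑ j ∈ s, σ (a j) • u j) v = ∑ j ∈ s, a j * B (u j) v := by
    intro s v
    induction s using Finset.induction_on with
    | empty => simpa using hB0 v
    | @insert j s hj ih =>
      rw [Finset.sum_insert hj, Finset.sum_insert hj, haddl, hsmull, hσ, ih]
  have hzero : (∑ j, σ (a j) • u j) = 0 := by
    apply hnd
    intro v
    rw [hsum]
    have hv := hvan v
    rw [hfx] at hv
    rw [← hv]
    apply Finset.sum_congr rfl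
    intro j _
    rw [mul_comm]
    rfl
  have haz : ∀ j, a j = 0 := by
    have := linearIndependent_iff'.mp hu Finset.univ (fun j => σ (a j)) hzero
    intro j
    have hσa : σ (a j) = 0 := by simpa using this j (Finset.mem_univ j)
    have h2 : σ (σ (a j)) = σ 0 := by rw [hσa]
    rw [hσ, map_zero] at h2
    exact h2
  apply hf0
  apply LinearMap.ext
  intro x
  rw [hfx]
  simp [haz]
end helpers

/-- counting singular points on a coset, unitary case -/
lemma unit_count {F : Type*} [Field F] [Fintype F] {V : Type*} [AddCommGroup V] [Module F V]
    [FiniteDimensional F V]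
    (σ : F ≃+* F) (hσ : ∀ a, σ (σ a) = a) (hne : σ ≠ RingEquiv.refl F)
    (B : V → V → F)
    (haddl : ∀ u v w : V, B (u + v) w = B u w + B v w)
    (haddr : ∀ u v w : V, B u (v + w) = B u v + B u w)
    (hsmull : ∀ (a : F) (u v : V), B (a • u) v = σ a * B u v)
    (hsmulr : ∀ (a : F) (u v : V), B u (a • v) = a * B u v)
    (hherm : ∀ u v : V, B u v = σ (B v u))
    (A : Submodule F V) (z w : V) (hwA : w ∈ A) (hBww : B w w = 0)
    (hBwz : B w z = 1) (hAperp : ∀ x ∈ A, B w x = 0) :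
    (Nat.card {x : A // B (z + x.1) (z + x.1) = 0}) ^ 2 * Fintype.card F
      = Nat.card A ^ 2 := by
  classical
  obtain ⟨htr_card, htr_surj⟩ := trace_lemma σ hσ hne
  set l : F → F := fun c => if hc : σ c = c then Classical.choose (htr_surj c hc) else 0 with hl
  have hl_spec : ∀ c : F, σ c = c → l c + σ (l c) = c := by
    intro c hc
    rw [hl]
    simp only [dif_pos hc]
    exact Classical.choose_spec (htr_surj c hc)
  have hBzw : B z w = 1 := by rw [hherm, hBwz, map_one]
  set Bz : V →ₗ[F] F := ⟨⟨B z, haddr z⟩, fun a v => hsmulr a z v⟩ with hBz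
  set ψ : A →ₗ[F] F := Bz.comp A.subtype with hψ
  have hψ_apply : ∀ x : A, ψ x = B z x.1 := fun x => rfl
  set w' : A := ⟨w, hwA⟩ with hw'
  have hψw : ψ w' = 1 := hBzw
  have hψ_surj : Function.Surjective ψ := by
    intro c
    refine ⟨c • w', ?_⟩
    rw [map_smul, hψw, smul_eq_mul, mul_one]
  have hBxw : ∀ x ∈ A, B x w = 0 := fun x hx => by
    rw [hherm, hAperp x hx, map_zero]
  -- key expansion
  have hexp : ∀ (u : V) (lam : F), B w u = 0 → B z u = 0 →
      B (z + (u + lam • w)) (z + (u + lam • w)) = B z z + B u u + (lam + σ lam) := by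
    intro u lam hwu hzu
    have huz : B u z = 0 := by rw [hherm, hzu, map_zero]
    have huw : B u w = 0 := by rw [hherm, hwu, map_zero]
    simp only [haddl, haddr, hsmull, hsmulr]
    rw [hzu, huz, hBzw, hBwz, hwu, huw, hBww]
    ring
  -- fixed-point values
  have hfixBuu : ∀ u : V, σ (B u u) = B u u := by
    intro u
    conv_rhs => rw [hherm]
  set c0 : V → F := fun u => -(B z z + B u u) with hc0
  have hc0fix : ∀ u : V, σ (c0 u) = c0 u := by
    intro u
    rw [hc0]
    simp only [map_neg, map_add, hfixBuu]
  have hlc0 : ∀ u : V, l (c0 u) + σ (l (c0 u)) = c0 u := fun u => hl_spec _ (hc0fix u)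
  -- the bijection
  set Kset := {mu : F // mu + σ mu = 0}
  set e : LinearMap.ker ψ × Kset → {x : A // B (z + x.1) (z + x.1) = 0} := fun p =>
    ⟨p.1.1 + (l (c0 p.1.1.1) + p.2.1) • w', by
      have h1 : ((p.1.1 + (l (c0 p.1.1.1) + p.2.1) • w' : A) : V)
          = p.1.1.1 + (l (c0 p.1.1.1) + p.2.1) • w := rfl
      rw [h1, hexp _ _ (hAperp _ p.1.1.2) p.1.2]
      have h2 := hlc0 p.1.1.1
      have h3 := p.2.2
      rw [hc0] at h2
      simp only [map_add]
      linear_combination h2 + h3⟩ with he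
  set g : {x : A // B (z + x.1) (z + x.1) = 0} → LinearMap.ker ψ × Kset := fun x =>
    (⟨x.1 - (B z x.1.1) • w', by
        rw [LinearMap.mem_ker, map_sub, map_smul, hψw, smul_eq_mul, mul_one, hψ_apply, sub_self]⟩,
     ⟨B z x.1.1 - l (c0 (x.1.1 - (B z x.1.1) • w)), by
        set lam := B z x.1.1 with hlam
        set u := x.1.1 - lam • w with hu
        have huA : u ∈ A := by
          rw [hu]; exact sub_mem x.1.2 (Submodule.smul_mem _ _ hwA)
        have hwu : B w u = 0 := hAperp u huA
        have hzu : B z u = 0 := by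
          rw [hu, sub_eq_add_neg, ← neg_smul, haddr, hsmulr, hBzw, hlam]; ring
        have hx0 := x.2
        have hdecomp : x.1.1 = u + lam • w := by rw [hu]; abel
        rw [hdecomp, hexp u lam hwu hzu] at hx0
        have h2 := hlc0 u
        rw [hc0] at h2
        simp only [map_sub]
        linear_combination hx0 - h2⟩)
    with hg
  have hge : ∀ p, g (e p) = p := by
    rintro ⟨⟨u, hu⟩, ⟨mu, hmu⟩⟩
    have hzu : B z u.1 = 0 := hu
    have hBzx : B z ((e (⟨u, hu⟩, ⟨mu, hmu⟩)).1.1 : V) = l (c0 u.1) + mu := by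
      show B z (u.1 + (l (c0 u.1) + mu) • w) = _
      rw [haddr, hsmulr, hBzw, hzu]; ring
    have hurec : ((e (⟨u, hu⟩, ⟨mu, hmu⟩)).1.1 : V) - (l (c0 u.1) + mu) • w = u.1 := by
      show u.1 + (l (c0 u.1) + mu) • w - (l (c0 u.1) + mu) • w = u.1
      abel
    refine Prod.ext ?_ ?_
    · apply Subtype.ext; apply Subtype.ext
      show ((e (⟨u, hu⟩, ⟨mu, hmu⟩)).1.1 : V) - (B z ((e (⟨u, hu⟩, ⟨mu, hmu⟩)).1.1 : V)) • w = u.1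
      rw [hBzx, hurec]
    · apply Subtype.ext
      show B z ((e (⟨u, hu⟩, ⟨mu, hmu⟩)).1.1 : V)
          - l (c0 (((e (⟨u, hu⟩, ⟨mu, hmu⟩)).1.1 : V) - (B z ((e (⟨u, hu⟩, ⟨mu, hmu⟩)).1.1 : V)) • w)) = mu
      rw [hBzx, hurec]
      ring
  have heg : ∀ x, e (g x) = x := by
    rintro ⟨x, hx⟩
    apply Subtype.ext; apply Subtype.ext
    show (x.1 - (B z x.1) • w) + ((l (c0 (x.1 - (B z x.1) • w)))
        + (B z x.1 - l (c0 (x.1 - (B z x.1) • w)))) • w = x.1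
    have : (l (c0 (x.1 - (B z x.1) • w))) + (B z x.1 - l (c0 (x.1 - (B z x.1) • w))) = B z x.1 := by
      ring
    rw [this]
    abel
  have hcard1 : Nat.card {x : A // B (z + x.1) (z + x.1) = 0}
      = Nat.card (LinearMap.ker ψ) * Nat.card Kset := by
    rw [← Nat.card_prod]
    exact (Nat.card_congr ⟨e, g, hge, heg⟩).symm
  have hrk : finrank F (LinearMap.range ψ) + finrank F (LinearMap.ker ψ) = finrank F A :=
    LinearMap.finrank_range_add_finrank_ker ψ
  have hrange : LinearMap.range ψ = ⊤ := LinearMap.range_eq_top.mpr hψ_surj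
  rw [hrange, finrank_top, finrank_self] at hrk
  rw [hcard1, card_module_eq' (F := F) (LinearMap.ker ψ), card_module_eq' (F := F) A, mul_pow,
    ← pow_mul, ← pow_mul, mul_assoc, htr_card, ← sq, ← pow_add]
  congr 1
  omega

end counts

/-- Lemma 9.2: if `T ⊂ W` are totally isotropic/singular subspaces of a
nondegenerate classical geometry of rank `r` over `GF(q)` with `dim T = i−1`, `dim W = i`,
then `|T^⊥ − W^⊥| = q^{2r−i+c}` (stated after squaring and multiplying by `q²`, so that
the half-integer `c` of the unitary cases gives an integer exponent). -/
theorem card_perp_diff_eq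
    {F : Type*} [Field F] [Fintype F]
    {V : Type*} [AddCommGroup V] [Module F V] [FiniteDimensional F V]
    (k : ClassicalKind) (r i : ℕ)
    (σ : F ≃+* F) (hσ : ∀ a, σ (σ a) = a)
    (B : V → V → F) (Q : V → F)
    (haddl : ∀ u v w : V, B (u + v) w = B u w + B v w)
    (haddr : ∀ u v w : V, B u (v + w) = B u v + B u w)
    (hsmull : ∀ (a : F) (u v : V), B (a • u) v = σ a * B u v)
    (hsmulr : ∀ (a : F) (u v : V), B u (a • v) = a * B u v)
    (hrefl : ∀ u v : V, B u v = 0 ↔ B v u = 0)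
    (hnd : ∀ u : V, (∀ v : V, B u v = 0) → u = 0)
    (hsp : k = ClassicalKind.sp → σ = RingEquiv.refl F ∧ ∀ v : V, B v v = 0)
    (horth : k.IsOrthogonal →
      σ = RingEquiv.refl F ∧ (∀ u v : V, B u v = B v u) ∧
      (∀ (a : F) (v : V), Q (a • v) = a ^ 2 * Q v) ∧
      (∀ u v : V, Q (u + v) = Q u + Q v + B u v))
    (hunit : k.IsUnitary → σ ≠ RingEquiv.refl F ∧ ∀ u v : V, B u v = σ (B v u))
    (hdim : finrank F V = k.dimension r)
    (hwitt_le : ∀ U : Submodule F V, (∀ v ∈ U, SingVec k B Q v) →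
      (∀ u ∈ U, ∀ w ∈ U, B u w = 0) → finrank F U ≤ r)
    (hwitt_ex : ∃ U : Submodule F V, (∀ v ∈ U, SingVec k B Q v) ∧
      (∀ u ∈ U, ∀ w ∈ U, B u w = 0) ∧ finrank F U = r)
    (T W : Submodule F V) (hTW : T ≤ W)
    (hWsing : ∀ v ∈ W, SingVec k B Q v)
    (hWiso : ∀ u ∈ W, ∀ w ∈ W, B u w = 0)
    (hi1 : 1 ≤ i) (hir : i ≤ r)
    (hT : finrank F T = i - 1) (hW : finrank F W = i) :
    (Nat.card {x : Submodule F V //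
        finrank F x = 1 ∧ (∀ v ∈ x, SingVec k B Q v) ∧
        (∀ v ∈ x, ∀ u ∈ T, B u v = 0) ∧
        ¬ (∀ v ∈ x, ∀ u ∈ W, B u v = 0)}) ^ 2 * Fintype.card F ^ 2
      = Fintype.card F ^ (2 * (2 * r - i) + k.dCoeff) := by
  classical
  obtain ⟨m, rfl⟩ : ∃ m, i = m + 1 := ⟨i - 1, by omega⟩
  set q := Fintype.card F with hq
  have hB0r : ∀ v : V, B v 0 = 0 := by
    intro v
    have h := haddr v 0 0
    rw [add_zero] at h
    linear_combination -h
  have hB0l : ∀ v : V, B 0 v = 0 := by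
    intro v
    have h := haddl 0 0 v
    rw [add_zero] at h
    linear_combination -h
  have hT' : finrank F T = m := by omega
  -- pick w ∈ W \ T
  have hTneW : T ≠ W := by
    intro h
    rw [h, hW] at hT'
    omega
  obtain ⟨w, hwW, hwT⟩ := SetLike.exists_of_lt (lt_of_le_of_ne hTW hTneW)
  -- W = T ⊔ span w
  have hinf : T ⊓ Submodule.span F {w} = ⊥ := by
    rw [Submodule.eq_bot_iff]
    rintro x ⟨hxT, hxs⟩
    obtain ⟨c, rfl⟩ := Submodule.mem_span_singleton.mp hxs
    rcases eq_or_ne c 0 with rfl | hc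
    · simp
    · refine absurd ?_ hwT
      have h2 := T.smul_mem c⁻¹ hxT
      rwa [smul_smul, inv_mul_cancel₀ hc, one_smul] at h2
  have hsupW : T ⊔ Submodule.span F {w} = W := by
    have hle : T ⊔ Submodule.span F {w} ≤ W :=
      sup_le hTW ((Submodule.span_singleton_le_iff_mem w W).mpr hwW)
    apply Submodule.eq_of_le_of_finrank_le hle
    have := Submodule.finrank_sup_add_finrank_inf_eq T (Submodule.span F {w})
    rw [hinf, finrank_bot, add_zero, hT', finrank_span_singleton (by rintro rfl; exact hwT T.zero_mem)] at this
    omega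
  -- a basis of T
  set tB : Basis (Fin m) F T := (Module.finBasis F T).reindex (finCongr (by rw [hT'])) with htB
  set tv : Fin m → V := fun j => ((tB j : T) : V) with htv
  have htv_mem : ∀ j, tv j ∈ T := fun j => (tB j).2
  have htv_ind : LinearIndependent F tv :=
    tB.linearIndependent.map' T.subtype (Submodule.ker_subtype T)
  have htv_span : Submodule.span F (Set.range tv) = T := by
    have h1 : Set.range tv = T.subtype '' Set.range tB := by
      rw [← Set.range_comp]; rfl
    rw [h1, ← Submodule.map_span, tB.span_eq, Submodule.map_subtype_top]
  -- the extended family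
  set uF : Fin (m + 1) → V := Fin.snoc tv w with huF
  have huF_ind : LinearIndependent F uF :=
    linearIndependent_fin_snoc.mpr ⟨htv_ind, by rw [htv_span]; exact hwT⟩
  -- the evaluation map
  set Λ : V →ₗ[F] (Fin (m + 1) → F) := LinearMap.pi (fun j => ⟨⟨B (uF j), haddr (uF j)⟩,
      fun a v => hsmulr a (uF j) v⟩) with hΛ
  have hΛ_surj : Function.Surjective Λ :=
    pi_surjective σ hσ B haddl haddr hsmull hsmulr hnd uF huF_ind
  have hΛ_apply : ∀ (v : V) (j : Fin (m + 1)), Λ v j = B (uF j) v := fun v j => rfl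
  -- perp characterization
  have hperpT : ∀ v : V, (∀ j, B (tv j) v = 0) ↔ (∀ u ∈ T, B u v = 0) := by
    intro v
    constructor
    · intro h u hu
      set Uv : Submodule F V :=
        { carrier := {u | B u v = 0}
          add_mem' := by
            intro a b ha hb
            show B (a + b) v = 0
            rw [haddl, ha, hb, add_zero]
          zero_mem' := hB0l v
          smul_mem' := by
            intro c x hx
            show B (c • x) v = 0
            rw [hsmull, hx, mul_zero] } with hUv
      have hle : T ≤ Uv := by
        rw [← htv_span]
        apply Submodule.span_le.mpr
        rintro _ ⟨j, rfl⟩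
        exact h j
      exact hle hu
    · intro h j
      exact h (tv j) (htv_mem j)
  have hΛ_char : ∀ (v : V) (c : F),
      Λ v = Fin.snoc (fun _ => 0) c ↔ ((∀ u ∈ T, B u v = 0) ∧ B w v = c) := by
    intro v c
    rw [funext_iff]
    constructor
    · intro h
      constructor
      · rw [← hperpT]
        intro j
        have := h (Fin.castSucc j)
        rwa [hΛ_apply, huF, Fin.snoc_castSucc, Fin.snoc_castSucc] at this
      · have := h (Fin.last m)
        rwa [hΛ_apply, huF, Fin.snoc_last, Fin.snoc_last] at this
    · rintro ⟨h1, h2⟩ j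
      induction j using Fin.lastCases with
      | last =>
        rw [hΛ_apply, huF, Fin.snoc_last, Fin.snoc_last]
        exact h2
      | cast j =>
        rw [hΛ_apply, huF, Fin.snoc_castSucc, Fin.snoc_castSucc]
        exact (hperpT v).mpr h1 j
  -- rank of the kernel
  have hrankA : finrank F (LinearMap.ker Λ) + (m + 1) = finrank F V := by
    have h1 := LinearMap.finrank_range_add_finrank_ker Λ
    rw [LinearMap.range_eq_top.mpr hΛ_surj, finrank_top] at h1
    have h2 : finrank F (Fin (m + 1) → F) = m + 1 := by
      rw [Module.finrank_pi]
      simp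
    omega
  -- the base point z
  obtain ⟨z, hz⟩ := hΛ_surj (Fin.snoc (fun _ => 0) 1)
  have hzchar := (hΛ_char z 1).mp hz
  have hzT : ∀ u ∈ T, B u z = 0 := hzchar.1
  have hwz : B w z = 1 := hzchar.2
  -- membership facts for the kernel
  have hkerΛ : ∀ v : V, v ∈ LinearMap.ker Λ ↔ ((∀ u ∈ T, B u v = 0) ∧ B w v = 0) := by
    intro v
    rw [LinearMap.mem_ker]
    have h0 : (0 : Fin (m + 1) → F) = Fin.snoc (fun _ => 0) 0 := by
      funext j
      induction j using Fin.lastCases with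
      | last => rw [Fin.snoc_last]; rfl
      | cast j => rw [Fin.snoc_castSucc]; rfl
    rw [h0]
    exact hΛ_char v 0
  have hwA : w ∈ LinearMap.ker Λ := by
    rw [hkerΛ]
    exact ⟨fun u hu => hWiso u (hTW hu) w hwW, hWiso w hwW w hwW⟩
  have hAperp : ∀ x ∈ LinearMap.ker Λ, B w x = 0 := fun x hx => ((hkerΛ x).mp hx).2
  -- singular vectors are closed under scaling
  have hsvec_smul : ∀ (c : F) (v : V), SingVec k B Q v → SingVec k B Q (c • v) := by
    intro c v hv
    cases k with
    | sp =>
      show B (c • v) (c • v) = 0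
      rw [hsmull, hsmulr, (hsp rfl).2 v]
      ring
    | oPlus =>
      obtain ⟨-, -, hQs, -⟩ := horth trivial
      show Q (c • v) = 0
      rw [hQs, (by exact hv : Q v = 0)]
      ring
    | oOdd =>
      obtain ⟨-, -, hQs, -⟩ := horth trivial
      show Q (c • v) = 0
      rw [hQs, (by exact hv : Q v = 0)]
      ring
    | oMinus =>
      obtain ⟨-, -, hQs, -⟩ := horth trivial
      show Q (c • v) = 0
      rw [hQs, (by exact hv : Q v = 0)]
      ring
    | uEven =>
      show B (c • v) (c • v) = 0
      rw [hsmull, hsmulr, (by exact hv : B v v = 0)]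
      ring
    | uOdd =>
      show B (c • v) (c • v) = 0
      rw [hsmull, hsmulr, (by exact hv : B v v = 0)]
      ring
  -- subtraction rules
  have hsubr : ∀ u v x : V, B u (v - x) = B u v - B u x := by
    intro u v x
    have h1 : v - x = v + (-1 : F) • x := by
      rw [neg_smul, one_smul, sub_eq_add_neg]
    rw [h1, haddr, hsmulr]
    ring
  have haddr' : ∀ u v x : V, B u (v + x) = B u v + B u x := haddr
  -- the points-vectors bijection
  set VSet := {v : V // (∀ u ∈ T, B u v = 0) ∧ B w v = 1 ∧ SingVec k B Q v} with hVSet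
  set toP : VSet → {x : Submodule F V //
      finrank F x = 1 ∧ (∀ v ∈ x, SingVec k B Q v) ∧
      (∀ v ∈ x, ∀ u ∈ T, B u v = 0) ∧
      ¬ (∀ v ∈ x, ∀ u ∈ W, B u v = 0)} := fun v =>
    ⟨Submodule.span F {v.1}, by
      have hvne : v.1 ≠ 0 := by
        intro h0
        have h1 := v.2.2.1
        rw [h0, hB0r] at h1
        exact zero_ne_one h1
      refine ⟨finrank_span_singleton hvne, ?_, ?_, ?_⟩
      · intro x hx
        obtain ⟨c, rfl⟩ := Submodule.mem_span_singleton.mp hx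
        exact hsvec_smul c v.1 v.2.2.2
      · intro x hx u hu
        obtain ⟨c, rfl⟩ := Submodule.mem_span_singleton.mp hx
        rw [hsmulr, v.2.1 u hu, mul_zero]
      · intro h
        have h1 := h v.1 (Submodule.mem_span_singleton_self v.1) w hwW
        rw [v.2.2.1] at h1
        exact one_ne_zero h1⟩ with htoP
  have htoP_bij : Function.Bijective toP := by
    constructor
    · rintro ⟨a, ha⟩ ⟨b, hb⟩ hab
      have h1 : Submodule.span F {a} = Submodule.span F {b} := congrArg Subtype.val hab
      have h2 : a ∈ Submodule.span F {b} := by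
        rw [← h1]; exact Submodule.mem_span_singleton_self a
      obtain ⟨c, rfl⟩ := Submodule.mem_span_singleton.mp h2
      have h3 : B w (c • b) = c * B w b := hsmulr c w b
      rw [ha.2.1, hb.2.1, mul_one] at h3
      apply Subtype.ext
      show c • b = b
      rw [← h3, one_smul]
    · rintro ⟨x, hx1, hx2, hx3, hx4⟩
      have hxbot : x ≠ ⊥ := by
        intro h
        rw [h, finrank_bot] at hx1
        omega
      obtain ⟨v₀, hv₀x, hv₀ne⟩ := Submodule.exists_mem_ne_zero_of_ne_bot hxbot
      have hxspan : Submodule.span F {v₀} = x := by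
        apply Submodule.eq_of_le_of_finrank_le
          ((Submodule.span_singleton_le_iff_mem v₀ x).mpr hv₀x)
        rw [hx1, finrank_span_singleton hv₀ne]
      have hBwv₀ : B w v₀ ≠ 0 := by
        intro h0
        apply hx4
        intro v' hv' u hu
        rw [← hsupW] at hu
        obtain ⟨t, ht, s, hs, rfl⟩ := Submodule.mem_sup.mp hu
        obtain ⟨c, rfl⟩ := Submodule.mem_span_singleton.mp hs
        rw [← hxspan] at hv'
        obtain ⟨d, rfl⟩ := Submodule.mem_span_singleton.mp hv'
        rw [haddl, hsmull, hsmulr, hsmulr, hx3 v₀ hv₀x t ht, h0]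
        ring
      refine ⟨⟨(B w v₀)⁻¹ • v₀, ⟨?_, ?_, ?_⟩⟩, ?_⟩
      · intro u hu
        rw [hsmulr, hx3 v₀ hv₀x u hu, mul_zero]
      · rw [hsmulr, inv_mul_cancel₀ hBwv₀]
      · exact hsvec_smul _ v₀ (hx2 v₀ hv₀x)
      · apply Subtype.ext
        show Submodule.span F {(B w v₀)⁻¹ • v₀} = x
        rw [Submodule.span_singleton_smul_eq (IsUnit.mk0 _ (inv_ne_zero hBwv₀)) v₀, hxspan]
  have hPV : Nat.card {x : Submodule F V //
      finrank F x = 1 ∧ (∀ v ∈ x, SingVec k B Q v) ∧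
      (∀ v ∈ x, ∀ u ∈ T, B u v = 0) ∧
      ¬ (∀ v ∈ x, ∀ u ∈ W, B u v = 0)} = Nat.card VSet :=
    (Nat.card_congr (Equiv.ofBijective toP htoP_bij)).symm
  -- the coset equivalence
  set A := LinearMap.ker Λ with hA
  set eC : VSet → {x : A // SingVec k B Q (z + x.1)} := fun v =>
    ⟨⟨v.1 - z, by
      rw [hA, hkerΛ]
      constructor
      · intro u hu
        rw [hsubr, v.2.1 u hu, hzT u hu, sub_zero]
      · rw [hsubr, v.2.2.1, hwz, sub_self]⟩, by
      show SingVec k B Q (z + (v.1 - z))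
      have h1 : z + (v.1 - z) = v.1 := by abel
      rw [h1]
      exact v.2.2.2⟩ with heC
  set gC : {x : A // SingVec k B Q (z + x.1)} → VSet := fun x =>
    ⟨z + x.1.1, by
      have hx := (hkerΛ x.1.1).mp x.1.2
      refine ⟨?_, ?_, x.2⟩
      · intro u hu
        rw [haddr', hzT u hu, hx.1 u hu, add_zero]
      · rw [haddr', hwz, hx.2, add_zero]⟩ with hgC
  have hVA : Nat.card VSet = Nat.card {x : A // SingVec k B Q (z + x.1)} := by
    apply Nat.card_congr
    refine ⟨eC, gC, ?_, ?_⟩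
    · rintro ⟨v, hv⟩
      apply Subtype.ext
      show z + (v - z) = v
      abel
    · rintro ⟨x, hx⟩
      apply Subtype.ext; apply Subtype.ext
      show z + x.1 - z = x.1
      abel
  have hcardA : Nat.card A = q ^ finrank F A := card_module_eq' (F := F) A
  rw [hPV, hVA]
  cases k with
  | sp =>
    have hdim' : finrank F V = 2 * r := hdim
    have hEq : Nat.card {x : A // SingVec ClassicalKind.sp B Q (z + x.1)} = Nat.card A :=
      Nat.card_congr (Equiv.subtypeUnivEquiv (fun x => (hsp rfl).2 _))
    rw [hEq, hcardA, ← pow_mul, ← pow_add]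
    congr 1
    show finrank F A * 2 + 2 = 2 * (2 * r - (m + 1)) + 2
    omega
  | oPlus =>
    have hdim' : finrank F V = 2 * r := hdim
    obtain ⟨-, hsym, hQs, hQa⟩ := horth trivial
    have hQw : Q w = 0 := hWsing w hwW
    have hBzw : B z w = 1 := by rw [hsym z w]; exact hwz
    have hoc := orth_count B Q haddr hsmulr hsym hQs hQa A z w hwA hQw hBzw hAperp
    have hEq : Nat.card {x : A // SingVec ClassicalKind.oPlus B Q (z + x.1)}
        = Nat.card {x : A // Q (z + x.1) = 0} :=
      Nat.card_congr (Equiv.subtypeEquivRight (fun x => Iff.rfl))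
    rw [hEq, ← mul_pow, hoc, hcardA, ← pow_mul]
    congr 1
    show finrank F A * 2 = 2 * (2 * r - (m + 1)) + 0
    omega
  | oOdd =>
    have hdim' : finrank F V = 2 * r + 1 := hdim
    obtain ⟨-, hsym, hQs, hQa⟩ := horth trivial
    have hQw : Q w = 0 := hWsing w hwW
    have hBzw : B z w = 1 := by rw [hsym z w]; exact hwz
    have hoc := orth_count B Q haddr hsmulr hsym hQs hQa A z w hwA hQw hBzw hAperp
    have hEq : Nat.card {x : A // SingVec ClassicalKind.oOdd B Q (z + x.1)}
        = Nat.card {x : A // Q (z + x.1) = 0} :=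
      Nat.card_congr (Equiv.subtypeEquivRight (fun x => Iff.rfl))
    rw [hEq, ← mul_pow, hoc, hcardA, ← pow_mul]
    congr 1
    show finrank F A * 2 = 2 * (2 * r - (m + 1)) + 2
    omega
  | oMinus =>
    have hdim' : finrank F V = 2 * r + 2 := hdim
    obtain ⟨-, hsym, hQs, hQa⟩ := horth trivial
    have hQw : Q w = 0 := hWsing w hwW
    have hBzw : B z w = 1 := by rw [hsym z w]; exact hwz
    have hoc := orth_count B Q haddr hsmulr hsym hQs hQa A z w hwA hQw hBzw hAperp
    have hEq : Nat.card {x : A // SingVec ClassicalKind.oMinus B Q (z + x.1)}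
        = Nat.card {x : A // Q (z + x.1) = 0} :=
      Nat.card_congr (Equiv.subtypeEquivRight (fun x => Iff.rfl))
    rw [hEq, ← mul_pow, hoc, hcardA, ← pow_mul]
    congr 1
    show finrank F A * 2 = 2 * (2 * r - (m + 1)) + 4
    omega
  | uEven =>
    have hdim' : finrank F V = 2 * r := hdim
    obtain ⟨hσne, hherm⟩ := hunit trivial
    have hBww : B w w = 0 := hWiso w hwW w hwW
    have huc := unit_count σ hσ hσne B haddl haddr hsmull hsmulr hherm A z w hwA hBww hwz hAperp
    have hEq : Nat.card {x : A // SingVec ClassicalKind.uEven B Q (z + x.1)}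
        = Nat.card {x : A // B (z + x.1) (z + x.1) = 0} :=
      Nat.card_congr (Equiv.subtypeEquivRight (fun x => Iff.rfl))
    rw [hEq, sq q, ← mul_assoc, huc, hcardA, ← pow_mul, ← pow_succ]
    congr 1
    show finrank F A * 2 + 1 = 2 * (2 * r - (m + 1)) + 1
    omega
  | uOdd =>
    have hdim' : finrank F V = 2 * r + 1 := hdim
    obtain ⟨hσne, hherm⟩ := hunit trivial
    have hBww : B w w = 0 := hWiso w hwW w hwW
    have huc := unit_count σ hσ hσne B haddl haddr hsmull hsmulr hherm A z w hwA hBww hwz hAperp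
    have hEq : Nat.card {x : A // SingVec ClassicalKind.uOdd B Q (z + x.1)}
        = Nat.card {x : A // B (z + x.1) (z + x.1) = 0} :=
      Nat.card_congr (Equiv.subtypeEquivRight (fun x => Iff.rfl))
    rw [hEq, sq q, ← mul_assoc, huc, hcardA, ← pow_mul, ← pow_succ]
    congr 1
    show finrank F A * 2 + 1 = 2 * (2 * r - (m + 1)) + 3
    omega
end
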